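/- arXiv:1803.07653 — 8 statements merged into one kernel-verified Lean document; each statement's English description precedes it below -/
import Mathlib

section
/- Under the stated hypotheses, r·J = det H. In particular, if J ≠ 0 then the transverse curvature satisfies r = det H / J, and (when J ≠ 0) det H = 0 if and only if r = 0. -/
open ComplexConjugate Matrix

/-- Under the Graham–Lee relations `ξ ⬝ H = r ⋅ conj v` and `⟪v, ξ⟫ = 1`,
with `J := ∑ conj(v_j) (adj H)_{jk} v_k`, we have `r·J = det H`; in particular if `J ≠ 0`
then `r = det H / J` and `det H = 0 ↔ r = 0`. -/
theorem stmt_0 (n : ℕ) (hn : 1 ≤ n)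
    (H : Matrix (Fin (n + 1)) (Fin (n + 1)) ℂ) (v ξ : Fin (n + 1) → ℂ) (r : ℝ)
    (hξH : ∀ k, ∑ j, ξ j * H j k = (r : ℂ) * conj (v k))
    (hvξ : ∑ j, v j * ξ j = 1)
    (J : ℂ) (hJ : J = ∑ j, ∑ k, conj (v j) * H.adjugate j k * v k) :
    (r : ℂ) * J = H.det ∧
      (J ≠ 0 → ((r : ℂ) = H.det / J ∧ (H.det = 0 ↔ r = 0))) := by
  have hJ' : J = star v ⬝ᵥ (H.adjugate *ᵥ v) := by
    rw [hJ]
    simp only [dotProduct, Matrix.mulVec, Pi.star_apply, Finset.mul_sum, mul_assoc]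
    rfl
  have hvm : ξ ᵥ* H = (r : ℂ) • star v := by
    funext k
    simpa [Matrix.vecMul, dotProduct] using hξH k
  have key : (r : ℂ) * J = H.det := by
    calc (r : ℂ) * J = ((r : ℂ) • star v) ⬝ᵥ (H.adjugate *ᵥ v) := by
          rw [hJ']; rw [smul_dotProduct, smul_eq_mul]
      _ = (ξ ᵥ* H) ⬝ᵥ (H.adjugate *ᵥ v) := by rw [hvm]
      _ = ξ ⬝ᵥ ((H * H.adjugate) *ᵥ v) := by
          rw [← Matrix.dotProduct_mulVec, Matrix.mulVec_mulVec]
      _ = ξ ⬝ᵥ (H.det • v) := by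
          rw [Matrix.mul_adjugate, Matrix.smul_mulVec, Matrix.one_mulVec]
      _ = H.det * ∑ j, v j * ξ j := by
          rw [dotProduct_smul, smul_eq_mul, dotProduct]
          congr 1
          exact Finset.sum_congr rfl fun j _ => mul_comm _ _
      _ = H.det := by rw [hvξ, mul_one]
  refine ⟨key, fun hJ0 => ?_⟩
  constructor
  · field_simp [← key]; exact key
  · constructor
    · intro hd
      have : (r : ℂ) = 0 := by
        rcases mul_eq_zero.mp (key.trans hd) with h | h
        · exact h
        · exact absurd h hJ0
      exact_mod_cast this
    · intro hr
      rw [← key, hr]; simp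
end

section
/- If det H ≠ 0, then J ≠ 0 and J·ξ_k = ∑_j conj(v_j)·(adjugate H)_{jk} for every k; equivalently, ξ_k = (∑_j conj(v_j)·(adjugate H)_{jk}) / J (in the paper's notation, ξ^k = φ^{j̄k} ρ_{j̄} / J[ρ]). -/
open ComplexConjugate Matrix

/-- If `det H ≠ 0` then `J ≠ 0` and `J·ξ_k = ∑_j conj(v_j)·(adj H)_{jk}`
for every `k`; equivalently `ξ_k = (∑_j conj(v_j)·(adj H)_{jk}) / J`. -/
theorem stmt_2 (n : ℕ) (hn : 1 ≤ n)
    (H : Matrix (Fin (n + 1)) (Fin (n + 1)) ℂ) (v ξ : Fin (n + 1) → ℂ) (r : ℝ)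
    (hξH : ∀ k, ∑ j, ξ j * H j k = (r : ℂ) * conj (v k))
    (hvξ : ∑ j, v j * ξ j = 1)
    (J : ℂ) (hJ : J = ∑ j, ∑ k, conj (v j) * H.adjugate j k * v k)
    (hdet : H.det ≠ 0) :
    J ≠ 0 ∧ ∀ k, J * ξ k = (∑ j, conj (v j) * H.adjugate j k) ∧
      ξ k = (∑ j, conj (v j) * H.adjugate j k) / J := by
  have key : ∀ m, H.det * ξ m = (r : ℂ) * ∑ j, conj (v j) * H.adjugate j m := by
    intro m
    have h1 : ∑ k, (∑ j, ξ j * H j k) * H.adjugate k m = H.det * ξ m := by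
      have := Matrix.mul_adjugate H
      calc ∑ k, (∑ j, ξ j * H j k) * H.adjugate k m
          = ∑ j, ξ j * ∑ k, H j k * H.adjugate k m := by
            simp only [Finset.sum_mul, Finset.mul_sum, mul_assoc]
            rw [Finset.sum_comm]
        _ = ∑ j, ξ j * ((H * H.adjugate) j m) := by
            simp [Matrix.mul_apply]
        _ = H.det * ξ m := by
            rw [this]
            simp [Matrix.one_apply, mul_comm]
    rw [← h1]
    calc ∑ k, (∑ j, ξ j * H j k) * H.adjugate k m
        = ∑ k, ((r : ℂ) * conj (v k)) * H.adjugate k m := by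
          refine Finset.sum_congr rfl fun k _ => ?_
          rw [hξH k]
      _ = (r : ℂ) * ∑ j, conj (v j) * H.adjugate j m := by
          rw [Finset.mul_sum]
          simp [mul_assoc]
  have hr : (r : ℂ) ≠ 0 := by
    intro h0
    have hz : ∀ m, ξ m = 0 := by
      intro m
      have := key m
      rw [h0, zero_mul] at this
      exact (mul_eq_zero.mp this).resolve_left hdet
    simp [hz] at hvξ
  have hJval : J = H.det / (r : ℂ) := by
    rw [hJ]
    calc ∑ j, ∑ k, conj (v j) * H.adjugate j k * v k
        = ∑ k, (∑ j, conj (v j) * H.adjugate j k) * v k := by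
          rw [Finset.sum_comm]
          simp [Finset.sum_mul]
      _ = ∑ k, (H.det * ξ k / (r : ℂ)) * v k := by
          refine Finset.sum_congr rfl fun k _ => ?_
          have := key k
          field_simp
          linear_combination (-(v k)) * this
      _ = H.det / (r : ℂ) * ∑ k, v k * ξ k := by
          rw [Finset.mul_sum]
          refine Finset.sum_congr rfl fun k _ => ?_
          field_simp
      _ = H.det / (r : ℂ) := by rw [hvξ, mul_one]
  have hJne : J ≠ 0 := by
    rw [hJval]
    exact div_ne_zero hdet hr
  refine ⟨hJne, fun k => ?_⟩
  have h2 : J * ξ k = ∑ j, conj (v j) * H.adjugate j k := by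
    have := key k
    rw [hJval]
    field_simp
    rw [this]
  exact ⟨h2, by rw [eq_div_iff hJne, mul_comm]; exact h2⟩
end

section
/- det ψ = J, where ψ is the rank-one perturbation ψ_{jk} := H_{jk} + (1 − r)·v_j·conj(v_k). In particular, if J ≠ 0 then ψ is invertible. -/
/-!
Multiplying `ξᵀ H · adj H = det H · ξᵀ` on the right by `v` and using `ξᵀ H = r v̄ᵀ`, `ξ · v = 1`
gives `det H = r J`. The matrix determinant lemma `det (A + u wᵀ) = det A + wᵀ (adj A) u`, valid
without invertibility, then gives `det ψ = det H + (1 - r) J = J`.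
-/

open ComplexConjugate Matrix Polynomial

namespace Matrix

variable {m R S : Type*} [Fintype m] [DecidableEq m] [CommRing R] [CommRing S]

theorem det_add_vecMulVec_of_isUnit {A : Matrix m m R} (hA : IsUnit A.det) (u w : m → R) :
    (A + vecMulVec u w).det = A.det + w ⬝ᵥ A.adjugate *ᵥ u := by
  rw [vecMulVec_eq Unit, det_add_replicateCol_mul_replicateRow hA,
    det_unique (n := Unit), add_apply, one_apply_eq, Matrix.mul_assoc, ← replicateCol_mulVec,
    replicateRow_mul_replicateCol_apply,
    inv_def, smul_mulVec, dotProduct_smul, smul_eq_mul, mul_add, mul_one, ← mul_assoc,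
    Ring.mul_inverse_cancel _ hA, one_mul]

theorem _root_.RingHom.map_det_add_vecMulVec (f : R →+* S) (A : Matrix m m R) (u w : m → R) :
    f (A + vecMulVec u w).det = (f.mapMatrix A + vecMulVec (f ∘ u) (f ∘ w)).det := by
  rw [RingHom.map_det]
  congr 1
  ext i j
  simp [vecMulVec_apply]

theorem _root_.RingHom.map_dotProduct_adjugate_mulVec (f : R →+* S) (A : Matrix m m R)
    (u w : m → R) :
    f (w ⬝ᵥ A.adjugate *ᵥ u) = (f ∘ w) ⬝ᵥ (f.mapMatrix A).adjugate *ᵥ (f ∘ u) := by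
  rw [← RingHom.map_adjugate]
  simp [dotProduct, mulVec, map_sum]

theorem det_add_vecMulVec (A : Matrix m m R) (u w : m → R) :
    (A + vecMulVec u w).det = A.det + w ⬝ᵥ A.adjugate *ᵥ u := by
  -- `X • 1 + A` has monic determinant, so it becomes invertible in a localization of `R[X]`
  -- into which `R[X]` still embeds; evaluating at `X = 0` then recovers `A`.
  set B : Matrix m m R[X] := charmatrix (-A)
  have hinj : Function.Injective (algebraMap R[X] (Localization.Away B.det)) :=
    IsLocalization.injective (M := .powers B.det) _
      (Submonoid.powers_le.mpr (charpoly_monic (-A)).mem_nonZeroDivisors)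
  have hB : (B + vecMulVec (C ∘ u) (C ∘ w)).det = B.det + (C ∘ w) ⬝ᵥ B.adjugate *ᵥ (C ∘ u) := by
    apply hinj
    rw [RingHom.map_det_add_vecMulVec, map_add, RingHom.map_dotProduct_adjugate_mulVec,
      RingHom.map_det]
    refine det_add_vecMulVec_of_isUnit ?_ _ _
    rw [← RingHom.map_det]
    exact IsLocalization.Away.algebraMap_isUnit _
  have hev : (evalRingHom 0).mapMatrix B = A := by
    ext i j
    by_cases hij : i = j
    · subst hij; simp [B, charmatrix_apply_eq]
    · simp [B, charmatrix_apply_ne _ _ _ hij]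
  have := congrArg (evalRingHom 0) hB
  rw [RingHom.map_det_add_vecMulVec, map_add, RingHom.map_dotProduct_adjugate_mulVec,
    RingHom.map_det, hev] at this
  simpa [Function.comp_def] using this

theorem det_eq_mul_dotProduct_adjugate_mulVec {A : Matrix m m R} {ξ u w : m → R} {c : R}
    (hA : ξ ᵥ* A = c • w) (hu : ξ ⬝ᵥ u = 1) : A.det = c * (w ⬝ᵥ A.adjugate *ᵥ u) :=
  calc A.det = (ξ ᵥ* (A * A.adjugate)) ⬝ᵥ u := by
        rw [mul_adjugate, vecMul_smul, vecMul_one, smul_dotProduct, hu, smul_eq_mul, mul_one]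
    _ = c * (w ⬝ᵥ A.adjugate *ᵥ u) := by
        rw [← vecMul_vecMul, hA, smul_vecMul, smul_dotProduct, dotProduct_mulVec, smul_eq_mul]

end Matrix

theorem stmt_4_general (n : ℕ)
    (H : Matrix (Fin (n + 1)) (Fin (n + 1)) ℂ) (v ξ : Fin (n + 1) → ℂ) (r : ℝ)
    (hξH : ∀ k, ∑ j, ξ j * H j k = (r : ℂ) * conj (v k))
    (hvξ : ∑ j, v j * ξ j = 1)
    (J : ℂ) (hJ : J = ∑ j, ∑ k, conj (v j) * H.adjugate j k * v k)
    (ψ : Matrix (Fin (n + 1)) (Fin (n + 1)) ℂ)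
    (hψ : ∀ j k, ψ j k = H j k + ((1 : ℂ) - (r : ℂ)) * v j * conj (v k)) :
    ψ.det = J ∧ (J ≠ 0 → IsUnit ψ) := by
  have hJ_dot : J = star v ⬝ᵥ H.adjugate *ᵥ v := by
    simp [hJ, dotProduct, mulVec, Finset.mul_sum, mul_assoc]
  have hψ_rankOne : ψ = H + vecMulVec (((1 : ℂ) - r) • v) (star v) := by
    ext j k
    simp [hψ, vecMulVec_apply, mul_assoc]
  have hdetH : H.det = r * J := by
    rw [hJ_dot]
    refine det_eq_mul_dotProduct_adjugate_mulVec (ξ := ξ) (funext fun k => ?_) ?_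
    · simp [vecMul, dotProduct, hξH]
    · rw [dotProduct_comm]; exact hvξ
  have hdet : ψ.det = J := by
    rw [hψ_rankOne, det_add_vecMulVec, hdetH, mulVec_smul, dotProduct_smul, ← hJ_dot, smul_eq_mul]
    ring
  exact ⟨hdet, fun hJ0 => (isUnit_iff_isUnit_det ψ).mpr (hdet ▸ hJ0.isUnit)⟩

/-- For the rank-one perturbation `ψ_{jk} = H_{jk} + (1−r)·v_j·conj(v_k)`,
`det ψ = J`; in particular if `J ≠ 0` then `ψ` is invertible. -/
theorem stmt_4 (n : ℕ) (hn : 1 ≤ n)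
    (H : Matrix (Fin (n + 1)) (Fin (n + 1)) ℂ) (v ξ : Fin (n + 1) → ℂ) (r : ℝ)
    (hξH : ∀ k, ∑ j, ξ j * H j k = (r : ℂ) * conj (v k))
    (hvξ : ∑ j, v j * ξ j = 1)
    (J : ℂ) (hJ : J = ∑ j, ∑ k, conj (v j) * H.adjugate j k * v k)
    (ψ : Matrix (Fin (n + 1)) (Fin (n + 1)) ℂ)
    (hψ : ∀ j k, ψ j k = H j k + ((1 : ℂ) - (r : ℂ)) * v j * conj (v k)) :
    ψ.det = J ∧ (J ≠ 0 → IsUnit ψ) :=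
  stmt_4_general n H v ξ r hξH hvξ J hJ ψ hψ
end

section
/- Assume J ≠ 0, so that ψ is invertible, and set P := ψ^{-1}. Then for all α, β ∈ {1,…,n}: ∑_{γ=1}^n P_{βγ}·h_{γα} = δ_{αβ} − conj(ξ_β)·(H_{wα}/v_w − conj(v_α)·H_{ww}/(v_w·conj(v_w))). (In the paper's notation, ψ^{β̄γ} h_{γᾱ} = δ_{ᾱ}^{β̄} − ξ^{β̄} Z_{ᾱ} log ρ_w.) -/
/-!
From `ξᵀ H = r v̄` and `v ⬝ ξ = 1` one gets `ξᵀ ψ = v̄`, and by Hermitian symmetry `ψ ξ̄ = v`.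
A vector `x` with `ψ x = 0` therefore satisfies `v̄ ⬝ x = 0` and `H x = 0`. By Cramer's rule the
`c`-th entry of `v̄ᵀ adj H` is the determinant of `H` with row `c` replaced by `v̄`, a matrix that
kills `x`; so `x ≠ 0` would force `J = v̄ᵀ adj H v = 0`. Hence `ψ` is invertible and `ψ⁻¹ v = ξ̄`.
Extended by a zero row `w`, the `α`-th column of the Levi matrix is
`ψ (e_α - (v̄_α / v̄_w) e_w) - λ_α v` with `λ_α = Z_ᾱ log ρ_w`; applying `ψ⁻¹` and reading off
row `β ≠ w` gives `δ_αβ - ξ̄_β λ_α`.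
-/

open ComplexConjugate Matrix

section Adjugate

variable {ι R : Type*} [Fintype ι] [DecidableEq ι] [CommRing R]

theorem Matrix.det_updateRow_eq_vecMul_adjugate (A : Matrix ι ι R) (c : ι) (u : ι → R) :
    (A.updateRow c u).det = (u ᵥ* A.adjugate) c := by
  rw [← cramer_transpose_apply, cramer_eq_adjugate_mulVec, ← adjugate_transpose,
    mulVec_transpose]

theorem Matrix.vecMul_adjugate_eq_zero [IsDomain R] {A : Matrix ι ι R} {u x : ι → R}
    (hx : x ≠ 0) (hAx : A *ᵥ x = 0) (hux : u ⬝ᵥ x = 0) : u ᵥ* A.adjugate = 0 := by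
  ext c
  rw [Pi.zero_apply, ← det_updateRow_eq_vecMul_adjugate, ← exists_mulVec_eq_zero_iff]
  refine ⟨x, hx, funext fun j => ?_⟩
  rcases eq_or_ne j c with rfl | hjc
  · simpa [mulVec, updateRow_self] using hux
  · simpa [mulVec, updateRow_ne hjc] using congrFun hAx j

end Adjugate

section GrahamLee

variable {ι : Type*} [Fintype ι] {H ψ : Matrix ι ι ℂ} {v ξ : ι → ℂ} {r : ℝ}

theorem Matrix.IsHermitian.mulVec_star_eq_of_vecMul_eq (hH : H.IsHermitian)
    (hξH : ξ ᵥ* H = (r : ℂ) • star v) :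
    H *ᵥ star ξ = (r : ℂ) • v := by
  rw [← hH.eq, ← star_vecMul, hξH, star_smul, star_star, Complex.star_def, Complex.conj_ofReal]

theorem vecMul_psi_eq_star (hψ : ψ = H + ((1 : ℂ) - r) • vecMulVec v (star v))
    (hξH : ξ ᵥ* H = (r : ℂ) • star v) (hvξ : v ⬝ᵥ ξ = 1) : ξ ᵥ* ψ = star v := by
  rw [hψ, vecMul_add, vecMul_smul, vecMul_vecMulVec, dotProduct_comm, hvξ, hξH]
  module

theorem psi_mulVec_star_eq (hψ : ψ = H + ((1 : ℂ) - r) • vecMulVec v (star v))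
    (hξH : ξ ᵥ* H = (r : ℂ) • star v) (hvξ : v ⬝ᵥ ξ = 1) (hH : H.IsHermitian) :
    ψ *ᵥ star ξ = v := by
  have hvξ' : star v ⬝ᵥ star ξ = 1 := by rw [star_dotProduct_star, dotProduct_comm, hvξ, star_one]
  rw [hψ, add_mulVec, smul_mulVec, vecMulVec_mulVec, hvξ', hH.mulVec_star_eq_of_vecMul_eq hξH]
  simp only [MulOpposite.op_one, one_smul]
  module

theorem det_psi_ne_zero [DecidableEq ι]
    (hψ : ψ = H + ((1 : ℂ) - r) • vecMulVec v (star v))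
    (hξH : ξ ᵥ* H = (r : ℂ) • star v) (hvξ : v ⬝ᵥ ξ = 1)
    (hJ : star v ⬝ᵥ H.adjugate *ᵥ v ≠ 0) : ψ.det ≠ 0 := by
  rw [Ne, ← exists_mulVec_eq_zero_iff]
  rintro ⟨x, hx, hψx⟩
  have hvx : star v ⬝ᵥ x = 0 := by
    rw [← vecMul_psi_eq_star hψ hξH hvξ, ← dotProduct_mulVec, hψx, dotProduct_zero]
  have hHx : H *ᵥ x = 0 := by
    simpa [hψ, add_mulVec, smul_mulVec, vecMulVec_mulVec, hvx] using hψx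
  exact hJ (by rw [dotProduct_mulVec, vecMul_adjugate_eq_zero hx hHx hvx, zero_dotProduct])

theorem psi_inv_mulVec_eq_star [DecidableEq ι]
    (hψ : ψ = H + ((1 : ℂ) - r) • vecMulVec v (star v))
    (hξH : ξ ᵥ* H = (r : ℂ) • star v) (hvξ : v ⬝ᵥ ξ = 1) (hH : H.IsHermitian)
    (hJ : star v ⬝ᵥ H.adjugate *ᵥ v ≠ 0) : ψ⁻¹ *ᵥ v = star ξ := by
  rw [← psi_mulVec_star_eq hψ hξH hvξ hH, mulVec_mulVec,
    nonsing_inv_mul _ (det_psi_ne_zero hψ hξH hvξ hJ).isUnit, one_mulVec]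

end GrahamLee

section Levi

variable {ι : Type*} {H ψ : Matrix ι ι ℂ} {v ξ : ι → ℂ} {r : ℝ} {w : ι}

noncomputable def leviForm (H : Matrix ι ι ℂ) (v : ι → ℂ) (w : ι) : Matrix ι ι ℂ :=
  Matrix.of fun i k => H i k - v i * H w k / v w - conj (v k) * H i w / conj (v w)
    + H w w * v i * conj (v k) / (v w * conj (v w))

theorem leviForm_apply_self_left (hvw : v w ≠ 0) (k : ι) : leviForm H v w w k = 0 := by
  have : conj (v w) ≠ 0 := by simpa using hvw
  simp only [leviForm, of_apply]
  field_simp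
  ring

theorem leviForm_col_eq [Fintype ι] [DecidableEq ι]
    (hψ : ψ = H + ((1 : ℂ) - r) • vecMulVec v (star v)) (hvw : v w ≠ 0) (k : ι) :
    (leviForm H v w).col k =
      ψ *ᵥ (Pi.single k 1 - (conj (v k) / conj (v w)) • Pi.single w 1)
        - (H w k / v w - conj (v k) * H w w / (v w * conj (v w))) • v := by
  have : conj (v w) ≠ 0 := by simpa using hvw
  ext j
  simp only [leviForm, col_apply, of_apply, mulVec_sub, mulVec_smul, mulVec_single_one, hψ,
    Pi.sub_apply, Pi.smul_apply, Matrix.add_apply, Matrix.smul_apply, vecMulVec_apply,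
    Pi.star_apply, smul_eq_mul, RCLike.star_def]
  field_simp
  ring

theorem psi_inv_mulVec_leviForm_col [Fintype ι] [DecidableEq ι]
    (hψ : ψ = H + ((1 : ℂ) - r) • vecMulVec v (star v))
    (hξH : ξ ᵥ* H = (r : ℂ) • star v) (hvξ : v ⬝ᵥ ξ = 1) (hH : H.IsHermitian)
    (hJ : star v ⬝ᵥ H.adjugate *ᵥ v ≠ 0) (hvw : v w ≠ 0) (k : ι) :
    ψ⁻¹ *ᵥ (leviForm H v w).col k =
      Pi.single k 1 - (conj (v k) / conj (v w)) • Pi.single w 1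
        - (H w k / v w - conj (v k) * H w w / (v w * conj (v w))) • star ξ := by
  rw [leviForm_col_eq hψ hvw, mulVec_sub, mulVec_smul, mulVec_mulVec,
    nonsing_inv_mul _ (det_psi_ne_zero hψ hξH hvξ hJ).isUnit, one_mulVec,
    psi_inv_mulVec_eq_star hψ hξH hvξ hH hJ]

end Levi

theorem stmt_7_general (n : ℕ)
    (H : Matrix (Fin (n + 1)) (Fin (n + 1)) ℂ) (v ξ : Fin (n + 1) → ℂ) (r : ℝ)
    (hξH : ∀ k, ∑ j, ξ j * H j k = (r : ℂ) * conj (v k))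
    (hvξ : ∑ j, v j * ξ j = 1)
    (hHerm : ∀ j k, conj (H j k) = H k j)
    (J : ℂ) (hJ : J = ∑ j, ∑ k, conj (v j) * H.adjugate j k * v k)
    (hJ0 : J ≠ 0)
    (ψ : Matrix (Fin (n + 1)) (Fin (n + 1)) ℂ)
    (hψ : ∀ j k, ψ j k = H j k + ((1 : ℂ) - (r : ℂ)) * v j * conj (v k))
    (P : Matrix (Fin (n + 1)) (Fin (n + 1)) ℂ) (hP : P = ψ⁻¹)
    (w : Fin (n + 1)) (hw : w = Fin.last n)
    (hvw : v w ≠ 0)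
    (h : Matrix (Fin n) (Fin n) ℂ)
    (hh : ∀ α β : Fin n, h α β =
      H α.castSucc β.castSucc - v α.castSucc * H w β.castSucc / v w
        - conj (v β.castSucc) * H α.castSucc w / conj (v w)
        + H w w * v α.castSucc * conj (v β.castSucc) / (v w * conj (v w))) :
    ∀ α β : Fin n, ∑ γ : Fin n, P β.castSucc γ.castSucc * h γ α =
      (if α = β then (1 : ℂ) else 0) - conj (ξ β.castSucc) *
        (H w α.castSucc / v w - conj (v α.castSucc) * H w w / (v w * conj (v w))) := by
  have hξH' : ξ ᵥ* H = (r : ℂ) • star v := funext hξH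
  have hHerm' : H.IsHermitian := ext fun j k => hHerm k j
  have hJ' : star v ⬝ᵥ H.adjugate *ᵥ v ≠ 0 := by
    simpa [hJ, dotProduct, mulVec, Finset.mul_sum, mul_assoc] using hJ0
  have hψ' : ψ = H + ((1 : ℂ) - r) • vecMulVec v (star v) := by
    ext j k
    simp [hψ, vecMulVec_apply, mul_assoc]
  intro α β
  subst hw hP
  have hcol := congrFun (psi_inv_mulVec_leviForm_col hψ' hξH' hvξ hHerm' hJ' hvw α.castSucc)
    β.castSucc
  calc ∑ γ : Fin n, ψ⁻¹ β.castSucc γ.castSucc * h γ α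
      = (ψ⁻¹ *ᵥ (leviForm H v (Fin.last n)).col α.castSucc) β.castSucc := by
        rw [mulVec, dotProduct, Fin.sum_univ_castSucc, col_apply, leviForm_apply_self_left hvw,
          mul_zero, add_zero]
        exact Finset.sum_congr rfl fun γ _ => by rw [hh]; rfl
    _ = _ := by
        simp [hcol, Pi.single_apply, Fin.castSucc_inj, eq_comm, (Fin.castSucc_lt_last β).ne,
          mul_comm]

/-- With `P := ψ⁻¹`, for all `α, β ∈ {1,…,n}`:
`∑_γ P_{βγ}·h_{γα} = δ_{αβ} − conj(ξ_β)·(H_{wα}/v_w − conj(v_α)·H_{ww}/(v_w·conj(v_w)))`,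
i.e. `ψ^{β̄γ} h_{γᾱ} = δ_{ᾱ}^{β̄} − ξ^{β̄} Z_{ᾱ} log ρ_w`. -/
theorem stmt_7 (n : ℕ) (hn : 1 ≤ n)
    (H : Matrix (Fin (n + 1)) (Fin (n + 1)) ℂ) (v ξ : Fin (n + 1) → ℂ) (r : ℝ)
    (hξH : ∀ k, ∑ j, ξ j * H j k = (r : ℂ) * conj (v k))
    (hvξ : ∑ j, v j * ξ j = 1)
    (hHerm : ∀ j k, conj (H j k) = H k j)
    (J : ℂ) (hJ : J = ∑ j, ∑ k, conj (v j) * H.adjugate j k * v k)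
    (hJ0 : J ≠ 0)
    (ψ : Matrix (Fin (n + 1)) (Fin (n + 1)) ℂ)
    (hψ : ∀ j k, ψ j k = H j k + ((1 : ℂ) - (r : ℂ)) * v j * conj (v k))
    (P : Matrix (Fin (n + 1)) (Fin (n + 1)) ℂ) (hP : P = ψ⁻¹)
    (w : Fin (n + 1)) (hw : w = Fin.last n)
    (hvw : v w ≠ 0)
    (h : Matrix (Fin n) (Fin n) ℂ)
    (hh : ∀ α β : Fin n, h α β =
      H α.castSucc β.castSucc - v α.castSucc * H w β.castSucc / v w
        - conj (v β.castSucc) * H α.castSucc w / conj (v w)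
        + H w w * v α.castSucc * conj (v β.castSucc) / (v w * conj (v w))) :
    ∀ α β : Fin n, ∑ γ : Fin n, P β.castSucc γ.castSucc * h γ α =
      (if α = β then (1 : ℂ) else 0) - conj (ξ β.castSucc) *
        (H w α.castSucc / v w - conj (v α.castSucc) * H w w / (v w * conj (v w))) :=
  stmt_7_general n H v ξ r hξH hvξ hHerm J hJ hJ0 ψ hψ P hP w hw hvw h hh
end

section
/- Assume J ≠ 0, so that ψ is invertible, and set P := ψ^{-1}. Then the Levi matrix h is invertible, with inverse given by h^{β̄γ} = ψ^{β̄γ} − ξ^{β̄} ξ^{γ}; precisely, for all α, β ∈ {1,…,n}: ∑_{γ=1}^n (P_{βγ} − conj(ξ_β)·ξ_γ)·h_{γα} = δ_{αβ}. -/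
section AuxDetLemma
open Matrix Polynomial

lemma detlem_aux {m R : Type*} [Fintype m] [DecidableEq m] [CommRing R]
    (A : Matrix m m R) (hA : IsUnit A.det) (u v : m → R) :
    (A + Matrix.replicateCol Unit u * Matrix.replicateRow Unit v).det = A.det + v ⬝ᵥ (A.adjugate *ᵥ u) := by
  rw [Matrix.det_add_replicateCol_mul_replicateRow hA]
  have h0 : ((1 : Matrix Unit Unit R) + Matrix.replicateRow Unit v * A⁻¹ * Matrix.replicateCol Unit u).det
      = ((1 : Matrix Unit Unit R) + Matrix.replicateRow Unit v * A⁻¹ * Matrix.replicateCol Unit u) default default :=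
    Matrix.det_unique _
  rw [h0]
  have h1 : ((1 : Matrix Unit Unit R) + Matrix.replicateRow Unit v * A⁻¹ * Matrix.replicateCol Unit u) default default
      = 1 + v ⬝ᵥ (A⁻¹ *ᵥ u) := by
    simp [Matrix.add_apply, Matrix.mul_apply, Matrix.replicateRow, Matrix.replicateCol, Matrix.one_apply,
      dotProduct, Matrix.mulVec, Finset.mul_sum, mul_comm, mul_assoc, mul_left_comm]
    rw [Finset.sum_comm]
  rw [h1, Matrix.inv_def]
  have h2 : v ⬝ᵥ ((Ring.inverse A.det • A.adjugate) *ᵥ u)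
      = Ring.inverse A.det * (v ⬝ᵥ (A.adjugate *ᵥ u)) := by
    rw [Matrix.smul_mulVec, dotProduct_smul, smul_eq_mul]
  rw [h2, mul_add, mul_one, ← mul_assoc, Ring.mul_inverse_cancel _ hA, one_mul]

lemma detlem {m : Type*} [Fintype m] [DecidableEq m]
    (A : Matrix m m ℂ) (u v : m → ℂ) :
    (A + Matrix.replicateCol Unit u * Matrix.replicateRow Unit v).det = A.det + v ⬝ᵥ (A.adjugate *ᵥ u) := by
  classical
  let φ : Polynomial ℂ →+* FractionRing (Polynomial ℂ) :=
    algebraMap (Polynomial ℂ) (FractionRing (Polynomial ℂ))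
  have hφ : Function.Injective φ :=
    IsFractionRing.injective (Polynomial ℂ) (FractionRing (Polynomial ℂ))
  set B : Matrix m m (Polynomial ℂ) :=
    (X : Polynomial ℂ) • (1 : Matrix m m (Polynomial ℂ)) + A.map C with hB
  have hBdet : IsUnit ((φ.mapMatrix B).det) := by
    rw [← RingHom.map_det]
    refine isUnit_iff_ne_zero.mpr ?_
    have hmono : B.det.Monic := Polynomial.leadingCoeff_det_X_one_add_C A
    simpa using (map_ne_zero_iff φ hφ).mpr hmono.ne_zero
  have hF := detlem_aux (φ.mapMatrix B) hBdet (fun i => φ (C (u i))) (fun i => φ (C (v i)))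
  have hcol : Matrix.replicateCol Unit (fun i => φ (C (u i))) * Matrix.replicateRow Unit (fun i => φ (C (v i)))
      = φ.mapMatrix (Matrix.replicateCol Unit (fun i => C (u i)) * Matrix.replicateRow Unit (fun i => C (v i))) := by
    ext i j
    simp [Matrix.mul_apply, Matrix.replicateCol, Matrix.row]
  have hdot : (fun i => φ (C (v i))) ⬝ᵥ ((φ.mapMatrix B).adjugate *ᵥ (fun i => φ (C (u i))))
      = φ ((fun i => C (v i)) ⬝ᵥ (B.adjugate *ᵥ (fun i => C (u i)))) := by
    rw [← RingHom.map_adjugate]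
    simp only [dotProduct, Matrix.mulVec, RingHom.mapMatrix_apply, Matrix.map_apply, map_sum,
      _root_.map_mul]
  rw [hcol, ← map_add, ← RingHom.map_det, ← RingHom.map_det, hdot, ← map_add] at hF
  have hR : (B + Matrix.replicateCol Unit (fun i => C (u i)) * Matrix.replicateRow Unit (fun i => C (v i))).det
      = B.det + (fun i => C (v i)) ⬝ᵥ (B.adjugate *ᵥ (fun i => C (u i))) := hφ hF
  let ε : Polynomial ℂ →+* ℂ := Polynomial.evalRingHom 0
  have hεB : ε.mapMatrix B = A := by
    ext i j
    by_cases hij : i = j <;>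
      simp [hB, ε, Matrix.one_apply, Matrix.smul_apply, Matrix.map_apply, hij,
        Polynomial.coe_evalRingHom]
  have hmain := congrArg ε hR
  rw [map_add, RingHom.map_det, RingHom.map_det, map_add, hεB] at hmain
  have hcol2 : ε.mapMatrix (Matrix.replicateCol Unit (fun i => C (u i)) * Matrix.replicateRow Unit (fun i => C (v i)))
      = Matrix.replicateCol Unit u * Matrix.replicateRow Unit v := by
    ext i j
    simp [Matrix.mul_apply, Matrix.replicateCol, Matrix.replicateRow, ε, Polynomial.coe_evalRingHom]
  rw [hcol2] at hmain
  have hdot2 : ε ((fun i => C (v i)) ⬝ᵥ (B.adjugate *ᵥ (fun i => C (u i))))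
      = v ⬝ᵥ (A.adjugate *ᵥ u) := by
    have hadj : (ε.mapMatrix B).adjugate = A.adjugate := by rw [hεB]
    rw [← hadj, ← RingHom.map_adjugate]
    simp only [dotProduct, Matrix.mulVec, RingHom.mapMatrix_apply, Matrix.map_apply, map_sum,
      _root_.map_mul]
    simp [ε, Polynomial.coe_evalRingHom]
  rw [hdot2] at hmain
  exact hmain

end AuxDetLemma


open ComplexConjugate Matrix

/-- The Levi matrix `h` is invertible, with inverse
`h^{β̄γ} = ψ^{β̄γ} − ξ^{β̄} ξ^{γ}`; precisely, for all `α, β ∈ {1,…,n}`: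
`∑_γ (P_{βγ} − conj(ξ_β)·ξ_γ)·h_{γα} = δ_{αβ}` where `P = ψ⁻¹`. -/
theorem stmt_8 (n : ℕ) (hn : 1 ≤ n)
    (H : Matrix (Fin (n + 1)) (Fin (n + 1)) ℂ) (v ξ : Fin (n + 1) → ℂ) (r : ℝ)
    (hξH : ∀ k, ∑ j, ξ j * H j k = (r : ℂ) * conj (v k))
    (hvξ : ∑ j, v j * ξ j = 1)
    (hHerm : ∀ j k, conj (H j k) = H k j)
    (J : ℂ) (hJ : J = ∑ j, ∑ k, conj (v j) * H.adjugate j k * v k)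
    (hJ0 : J ≠ 0)
    (ψ : Matrix (Fin (n + 1)) (Fin (n + 1)) ℂ)
    (hψ : ∀ j k, ψ j k = H j k + ((1 : ℂ) - (r : ℂ)) * v j * conj (v k))
    (P : Matrix (Fin (n + 1)) (Fin (n + 1)) ℂ) (hP : P = ψ⁻¹)
    (w : Fin (n + 1)) (hw : w = Fin.last n)
    (hvw : v w ≠ 0)
    (h : Matrix (Fin n) (Fin n) ℂ)
    (hh : ∀ α β : Fin n, h α β =
      H α.castSucc β.castSucc - v α.castSucc * H w β.castSucc / v w
        - conj (v β.castSucc) * H α.castSucc w / conj (v w)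
        + H w w * v α.castSucc * conj (v β.castSucc) / (v w * conj (v w))) :
    IsUnit h ∧
      ∀ α β : Fin n,
        ∑ γ : Fin n, (P β.castSucc γ.castSucc - conj (ξ β.castSucc) * ξ γ.castSucc) * h γ α =
          (if α = β then (1 : ℂ) else 0) := by
  classical
  have hvwc : conj (v w) ≠ 0 := by
    intro h0
    apply hvw
    have := congrArg conj h0
    simpa using this
  -- adjugate multiplication fact
  have hmulc : ∀ i k, ∑ j, H i j * H.adjugate j k = H.det * (if i = k then 1 else 0) := by
    intro i k
    have h1 : (H * H.adjugate) i k = (H.det • (1 : Matrix (Fin (n+1)) (Fin (n+1)) ℂ)) i k := by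
      rw [Matrix.mul_adjugate]
    simpa [Matrix.mul_apply, Matrix.one_apply, Matrix.smul_apply, smul_eq_mul] using h1
  -- det H = r * J
  have hdetH : H.det = (r : ℂ) * J := by
    have step1 : (r : ℂ) * J = ∑ j, ∑ k, (∑ i, ξ i * H i j) * (H.adjugate j k * v k) := by
      rw [hJ, Finset.mul_sum]
      refine Finset.sum_congr rfl fun j _ => ?_
      rw [Finset.mul_sum]
      refine Finset.sum_congr rfl fun k _ => ?_
      rw [hξH j]; ring
    have swap3 : ∀ f : Fin (n+1) → Fin (n+1) → Fin (n+1) → ℂ,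
        ∑ j, ∑ k, ∑ i, f i j k = ∑ i, ∑ j, ∑ k, f i j k := by
      intro f
      calc ∑ j, ∑ k, ∑ i, f i j k = ∑ j, ∑ i, ∑ k, f i j k :=
            Finset.sum_congr rfl fun j _ => Finset.sum_comm
        _ = ∑ i, ∑ j, ∑ k, f i j k := Finset.sum_comm
    have step2 : ∑ j, ∑ k, (∑ i, ξ i * H i j) * (H.adjugate j k * v k)
        = ∑ i, ξ i * ∑ k, (∑ j, H i j * H.adjugate j k) * v k := by
      simp only [Finset.sum_mul, Finset.mul_sum]
      rw [swap3 (fun i j k => ξ i * H i j * (H.adjugate j k * v k))]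
      refine Finset.sum_congr rfl fun i _ => ?_
      rw [Finset.sum_comm]
      refine Finset.sum_congr rfl fun j _ => Finset.sum_congr rfl fun k _ => by ring
    have step3 : ∑ i, ξ i * ∑ k, (∑ j, H i j * H.adjugate j k) * v k = H.det := by
      have : ∀ i, (∑ k, (∑ j, H i j * H.adjugate j k) * v k) = H.det * v i := by
        intro i
        simp only [hmulc]
        simp [mul_ite, ite_mul, mul_assoc]
      simp only [this]
      calc ∑ i, ξ i * (H.det * v i) = H.det * ∑ i, v i * ξ i := by
            rw [Finset.mul_sum]; exact Finset.sum_congr rfl fun i _ => by ring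
        _ = H.det := by rw [hvξ, mul_one]
    rw [step1, step2, step3]
  -- ψ as rank-one update
  have hψdecomp : ψ = H + Matrix.replicateCol Unit (fun j => ((1 : ℂ) - (r : ℂ)) * v j)
      * Matrix.replicateRow Unit (fun k => conj (v k)) := by
    ext j k
    rw [hψ]
    simp [Matrix.mul_apply, Matrix.replicateCol, Matrix.replicateRow, Matrix.add_apply]
  have hdetψ : ψ.det = J := by
    rw [hψdecomp, detlem, hdetH]
    have : (fun k => conj (v k)) ⬝ᵥ (H.adjugate *ᵥ fun j => ((1 : ℂ) - (r : ℂ)) * v j)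
        = ((1 : ℂ) - (r : ℂ)) * J := by
      rw [hJ]
      simp only [dotProduct, Matrix.mulVec, Finset.mul_sum]
      refine Finset.sum_congr rfl fun j _ => Finset.sum_congr rfl fun k _ => by ring
    rw [this]
    ring
  have hψu : IsUnit ψ.det := by rw [hdetψ]; exact isUnit_iff_ne_zero.mpr hJ0
  have hPψ : P * ψ = 1 := by rw [hP]; exact Matrix.nonsing_inv_mul ψ hψu
  have hψPmat : ψ * P = 1 := by rw [hP]; exact Matrix.mul_nonsing_inv ψ hψu
  have hPψe : ∀ j k, ∑ l, P j l * ψ l k = if j = k then (1 : ℂ) else 0 := by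
    intro j k
    have := congrFun (congrFun hPψ j) k
    simpa [Matrix.mul_apply, Matrix.one_apply] using this
  -- ξ ψ = conj v
  have hξψ : ∀ k, ∑ j, ξ j * ψ j k = conj (v k) := by
    intro k
    simp only [hψ, mul_add, Finset.sum_add_distrib]
    rw [hξH k]
    have : ∑ j, ξ j * (((1 : ℂ) - (r : ℂ)) * v j * conj (v k))
        = ((1 : ℂ) - (r : ℂ)) * conj (v k) * ∑ j, v j * ξ j := by
      rw [Finset.mul_sum]
      exact Finset.sum_congr rfl fun j _ => by ring
    rw [this, hvξ]
    ring
  -- conj v ⬝ P = ξ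
  have hvP : ∀ l, ∑ k, conj (v k) * P k l = ξ l := by
    intro l
    have expand : ∑ k, conj (v k) * P k l = ∑ k, (∑ j, ξ j * ψ j k) * P k l := by
      refine Finset.sum_congr rfl fun k _ => ?_
      rw [hξψ k]
    rw [expand]
    have swap : ∑ k, (∑ j, ξ j * ψ j k) * P k l = ∑ j, ξ j * ∑ k, ψ j k * P k l := by
      simp only [Finset.sum_mul, Finset.mul_sum]
      rw [Finset.sum_comm]
      exact Finset.sum_congr rfl fun k _ => Finset.sum_congr rfl fun j _ => by ring
    rw [swap]
    have : ∀ j, (∑ k, ψ j k * P k l) = if j = l then (1:ℂ) else 0 := by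
      intro j
      have := congrFun (congrFun hψPmat j) l
      simpa [Matrix.mul_apply, Matrix.one_apply] using this
    simp only [this]
    simp [mul_ite]
  -- P is Hermitian
  have hψHerm : ψ.conjTranspose = ψ := by
    ext j k
    rw [Matrix.conjTranspose_apply, ← starRingEnd_apply, hψ k j, hψ j k]
    rw [RingHom.map_add, RingHom.map_mul, RingHom.map_mul, RingHom.map_sub, RingHom.map_one,
      Complex.conj_ofReal, hHerm, Complex.conj_conj]
    ring
  have hPHerm : ∀ j k, conj (P j k) = P k j := by
    have : P.conjTranspose = P := by
      rw [hP, Matrix.conjTranspose_nonsing_inv, hψHerm]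
    intro j k
    have := congrFun (congrFun this k) j
    simpa [Matrix.conjTranspose_apply] using this
  -- P v = conj ξ
  have hPv : ∀ k, ∑ j, P k j * v j = conj (ξ k) := by
    intro k
    have : ∑ j, P k j * v j = conj (∑ j, conj (v j) * P j k) := by
      rw [map_sum]
      refine Finset.sum_congr rfl fun j _ => ?_
      rw [RingHom.map_mul, hPHerm]
      simp [mul_comm]
    rw [this, hvP]
  -- h in terms of ψ
  have hhψ : ∀ α β : Fin n, h α β =
      ψ α.castSucc β.castSucc - v α.castSucc * ψ w β.castSucc / v w
        - conj (v β.castSucc) * ψ α.castSucc w / conj (v w)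
        + ψ w w * v α.castSucc * conj (v β.castSucc) / (v w * conj (v w)) := by
    intro α β
    rw [hh α β, hψ, hψ, hψ, hψ]
    field_simp
    ring
  have hcs : ∀ γ : Fin n, γ.castSucc ≠ w := by
    intro γ; rw [hw]; exact (Fin.castSucc_lt_last γ).ne
  have split : ∀ f : Fin (n+1) → ℂ, ∑ j, f j = (∑ γ : Fin n, f γ.castSucc) + f w := by
    intro f; rw [hw]; exact Fin.sum_univ_castSucc f
  have hvξ' : ∑ j, ξ j * v j = 1 := by
    rw [← hvξ]; exact Finset.sum_congr rfl fun j _ => mul_comm _ _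
  have key : ∀ α β : Fin n,
      ∑ γ : Fin n, (P β.castSucc γ.castSucc - conj (ξ β.castSucc) * ξ γ.castSucc) * h γ α =
        (if α = β then (1 : ℂ) else 0) := by
    intro α β
    have S1 : ∑ γ : Fin n, P β.castSucc γ.castSucc * ψ γ.castSucc α.castSucc
        = (if α = β then (1:ℂ) else 0) - P β.castSucc w * ψ w α.castSucc := by
      have h0 := hPψe β.castSucc α.castSucc
      rw [split (fun l => P β.castSucc l * ψ l α.castSucc)] at h0
      refine eq_sub_of_add_eq (h0.trans ?_)
      simp [Fin.castSucc_inj, eq_comm]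
    have S2 : ∑ γ : Fin n, P β.castSucc γ.castSucc * v γ.castSucc
        = conj (ξ β.castSucc) - P β.castSucc w * v w := by
      have h0 := hPv β.castSucc
      rw [split (fun l => P β.castSucc l * v l)] at h0
      exact eq_sub_of_add_eq h0
    have S3 : ∑ γ : Fin n, P β.castSucc γ.castSucc * ψ γ.castSucc w
        = - (P β.castSucc w * ψ w w) := by
      have h0 := hPψe β.castSucc w
      rw [split (fun l => P β.castSucc l * ψ l w), if_neg (hcs β)] at h0
      exact eq_neg_of_add_eq_zero_left h0
    have S4 : ∑ γ : Fin n, ξ γ.castSucc * ψ γ.castSucc α.castSucc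
        = conj (v α.castSucc) - ξ w * ψ w α.castSucc := by
      have h0 := hξψ α.castSucc
      rw [split (fun l => ξ l * ψ l α.castSucc)] at h0
      exact eq_sub_of_add_eq h0
    have S5 : ∑ γ : Fin n, ξ γ.castSucc * v γ.castSucc = 1 - ξ w * v w := by
      have h0 := hvξ'
      rw [split (fun l => ξ l * v l)] at h0
      exact eq_sub_of_add_eq h0
    have S6 : ∑ γ : Fin n, ξ γ.castSucc * ψ γ.castSucc w
        = conj (v w) - ξ w * ψ w w := by
      have h0 := hξψ w
      rw [split (fun l => ξ l * ψ l w)] at h0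
      exact eq_sub_of_add_eq h0
    have expand : ∀ γ : Fin n,
        (P β.castSucc γ.castSucc - conj (ξ β.castSucc) * ξ γ.castSucc) * h γ α =
        P β.castSucc γ.castSucc * ψ γ.castSucc α.castSucc
          - ψ w α.castSucc / v w * (P β.castSucc γ.castSucc * v γ.castSucc)
          - conj (v α.castSucc) / conj (v w) * (P β.castSucc γ.castSucc * ψ γ.castSucc w)
          + ψ w w * conj (v α.castSucc) / (v w * conj (v w))
              * (P β.castSucc γ.castSucc * v γ.castSucc)
          - conj (ξ β.castSucc) * (ξ γ.castSucc * ψ γ.castSucc α.castSucc)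
          + ψ w α.castSucc / v w * (conj (ξ β.castSucc) * (ξ γ.castSucc * v γ.castSucc))
          + conj (v α.castSucc) / conj (v w)
              * (conj (ξ β.castSucc) * (ξ γ.castSucc * ψ γ.castSucc w))
          - ψ w w * conj (v α.castSucc) / (v w * conj (v w))
              * (conj (ξ β.castSucc) * (ξ γ.castSucc * v γ.castSucc)) := by
      intro γ
      rw [hhψ γ α]
      ring
    rw [Finset.sum_congr rfl (fun γ _ => expand γ)]
    simp only [Finset.sum_add_distrib, Finset.sum_sub_distrib, ← Finset.mul_sum]
    rw [S1, S2, S3, S4, S5, S6]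
    have hclean : v w ^ 3 * (starRingEnd ℂ) (v w) ^ 3 * (v w)⁻¹ ^ 3
        * ((starRingEnd ℂ) (v w))⁻¹ ^ 3 = 1 := by
      rw [inv_pow, inv_pow]
      field_simp
    by_cases hab : α = β
    · simp only [hab, if_true]
      field_simp
      ring_nf
    · simp only [hab, if_false]
      field_simp
      ring
  refine ⟨?_, key⟩
  have hQ : (Matrix.of fun β γ : Fin n =>
      P β.castSucc γ.castSucc - conj (ξ β.castSucc) * ξ γ.castSucc) * h = 1 := by
    ext β α
    rw [Matrix.mul_apply, Matrix.one_apply]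
    simp only [Matrix.of_apply]
    rw [key α β]
    simp [eq_comm]
  exact (Matrix.isUnit_iff_isUnit_det h).2 (Matrix.isUnit_det_of_left_inverse hQ)
end

section
/- Assume J ≠ 0, set P := ψ^{-1} and G_{βγ} := P_{βγ} − conj(ξ_β)·ξ_γ for β, γ ∈ {1,…,n}. Then for every β ∈ {1,…,n} and every k ∈ {1,…,n+1}: ∑_{γ=1}^n G_{βγ}·(δ_{γk} − (v_γ/v_w)·δ_{wk}) = P_{βk} − conj(ξ_β)·ξ_k. (This is the coefficient identity h^{β̄γ} Z_γ = (ψ^{β̄k} − ξ^{β̄} ξ^{k}) ∂_k underlying the explicit formula □_b f = −(ξ^j ξ^{k̄} − ψ^{k̄j})∂_j∂_{k̄} f − n ξ̄ f for the Kohn-Laplacian in Proposition 3.1.) -/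
open ComplexConjugate Matrix

/-- Adding multiples of a fixed row `B j₀` to other rows does not change the determinant. -/
private lemma aux_det_add_rows {m : Type*} [Fintype m] [DecidableEq m]
    (S : Finset m) (B : Matrix m m ℂ) (c : m → ℂ) (j₀ : m) (hj₀ : j₀ ∉ S) :
    det (Matrix.of fun i => if i ∈ S then B i + c i • B j₀ else B i) = det B := by
  induction S using Finset.induction_on generalizing B with
  | empty => simp only [Finset.notMem_empty, if_false]; rfl
  | @insert k S hk ih =>
    have hj₀S : j₀ ∉ S := fun h => hj₀ (Finset.mem_insert_of_mem h)
    have hkj : k ≠ j₀ := fun h => hj₀ (h ▸ Finset.mem_insert_self k S)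
    set M : Matrix m m ℂ := Matrix.of fun i => if i ∈ S then B i + c i • B j₀ else B i with hM
    have hMk : M k = B k := if_neg hk
    have hMj₀ : M j₀ = B j₀ := if_neg hj₀S
    have heq : (Matrix.of fun i => if i ∈ insert k S then B i + c i • B j₀ else B i)
        = M.updateRow k (M k + c k • M j₀) := by
      ext i j
      rcases eq_or_ne i k with rfl | hik
      · simp [Matrix.updateRow_self, hMk, hMj₀]
      · simp [Matrix.updateRow_ne hik, hM, Finset.mem_insert, hik]
    rw [heq, Matrix.det_updateRow_add_smul_self M hkj, ih B hj₀S]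

/-- Rank-one update expansion of the determinant over a finset of rows. -/
private lemma aux_det_expand {m : Type*} [Fintype m] [DecidableEq m]
    (S : Finset m) (A : Matrix m m ℂ) (u w : m → ℂ) :
    det (Matrix.of fun i => if i ∈ S then A i + u i • w else A i)
      = det A + ∑ i ∈ S, u i * det (A.updateRow i w) := by
  induction S using Finset.induction_on with
  | empty => simp only [Finset.notMem_empty, if_false, Finset.sum_empty, add_zero]; rfl
  | @insert k S hk ih =>
    set M : Matrix m m ℂ := Matrix.of fun i => if i ∈ S then A i + u i • w else A i with hM
    have hMk : M k = A k := if_neg hk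
    have heq : (Matrix.of fun i => if i ∈ insert k S then A i + u i • w else A i)
        = M.updateRow k (A k + u k • w) := by
      ext i j
      rcases eq_or_ne i k with rfl | hik
      · simp [Matrix.updateRow_self]
      · simp [Matrix.updateRow_ne hik, hM, Finset.mem_insert, hik]
    have hMw : det (M.updateRow k w) = det (A.updateRow k w) := by
      have h2 : M.updateRow k w
          = Matrix.of fun i => if i ∈ S then (A.updateRow k w) i + u i • (A.updateRow k w) k
              else (A.updateRow k w) i := by
        ext i j
        rcases eq_or_ne i k with rfl | hik
        · simp [Matrix.updateRow_self, hk]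
        · simp [Matrix.updateRow_ne hik, hM, hik]
      rw [h2, aux_det_add_rows S (A.updateRow k w) u k hk]
    rw [heq, Matrix.det_updateRow_add, Matrix.det_updateRow_smul, hMw]
    have : M.updateRow k (A k) = M := by rw [← hMk, Matrix.updateRow_eq_self]
    rw [this, ih, Finset.sum_insert hk]
    ring

/-- With `P := ψ⁻¹` and `G_{βγ} := P_{βγ} − conj(ξ_β)·ξ_γ`, for every
`β ∈ {1,…,n}` and `k ∈ {1,…,n+1}`:
`∑_γ G_{βγ}·(δ_{γk} − (v_γ/v_w)·δ_{wk}) = P_{βk} − conj(ξ_β)·ξ_k`,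
the coefficient identity `h^{β̄γ} Z_γ = (ψ^{β̄k} − ξ^{β̄} ξ^{k}) ∂_k`. -/
theorem stmt_9 (n : ℕ) (hn : 1 ≤ n)
    (H : Matrix (Fin (n + 1)) (Fin (n + 1)) ℂ) (v ξ : Fin (n + 1) → ℂ) (r : ℝ)
    (hξH : ∀ k, ∑ j, ξ j * H j k = (r : ℂ) * conj (v k))
    (hvξ : ∑ j, v j * ξ j = 1)
    (hHerm : ∀ j k, conj (H j k) = H k j)
    (J : ℂ) (hJ : J = ∑ j, ∑ k, conj (v j) * H.adjugate j k * v k)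
    (hJ0 : J ≠ 0)
    (ψ : Matrix (Fin (n + 1)) (Fin (n + 1)) ℂ)
    (hψ : ∀ j k, ψ j k = H j k + ((1 : ℂ) - (r : ℂ)) * v j * conj (v k))
    (P : Matrix (Fin (n + 1)) (Fin (n + 1)) ℂ) (hP : P = ψ⁻¹)
    (w : Fin (n + 1)) (hw : w = Fin.last n)
    (hvw : v w ≠ 0)
    (G : Matrix (Fin n) (Fin n) ℂ)
    (hG : ∀ β γ : Fin n, G β γ = P β.castSucc γ.castSucc - conj (ξ β.castSucc) * ξ γ.castSucc) :
    ∀ (β : Fin n) (k : Fin (n + 1)),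
      ∑ γ : Fin n, G β γ *
        ((if γ.castSucc = k then (1 : ℂ) else 0) - (v γ.castSucc / v w) * (if w = k then (1 : ℂ) else 0)) =
        P β.castSucc k - conj (ξ β.castSucc) * ξ k := by
  -- det H = r * J
  have hdetH : H.det = (r : ℂ) * J := by
    have key : ∀ k, H.det * ξ k = (r : ℂ) * ∑ j, conj (v j) * H.adjugate j k := by
      intro k
      have h1 : ∑ j, ξ j * (H * H.adjugate) j k = H.det * ξ k := by
        rw [Matrix.mul_adjugate, Finset.sum_eq_single k]
        · simp [Matrix.smul_apply, Matrix.one_apply]; ring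
        · intro j _ hj; simp [Matrix.smul_apply, Matrix.one_apply, hj]
        · simp
      rw [← h1]
      calc ∑ j, ξ j * (H * H.adjugate) j k
          = ∑ j, ∑ i, ξ j * (H j i * H.adjugate i k) := by
            refine Finset.sum_congr rfl fun j _ => ?_
            rw [Matrix.mul_apply, Finset.mul_sum]
        _ = ∑ i, ∑ j, ξ j * (H j i * H.adjugate i k) := Finset.sum_comm
        _ = ∑ i, (∑ j, ξ j * H j i) * H.adjugate i k := by
            refine Finset.sum_congr rfl fun i _ => ?_
            rw [Finset.sum_mul]
            exact Finset.sum_congr rfl fun j _ => by ring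
        _ = (r : ℂ) * ∑ i, conj (v i) * H.adjugate i k := by
            rw [Finset.mul_sum]
            refine Finset.sum_congr rfl fun i _ => ?_
            rw [hξH i]; ring
    calc H.det = H.det * ∑ j, v j * ξ j := by rw [hvξ, mul_one]
      _ = ∑ k, v k * (H.det * ξ k) := by rw [Finset.mul_sum]; congr 1; ext k; ring
      _ = ∑ k, v k * ((r : ℂ) * ∑ j, conj (v j) * H.adjugate j k) := by
          congr 1; ext k; rw [key]
      _ = ∑ k, ∑ j, (r : ℂ) * (conj (v j) * H.adjugate j k * v k) := by
          refine Finset.sum_congr rfl fun k _ => ?_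
          rw [Finset.mul_sum, Finset.mul_sum]
          exact Finset.sum_congr rfl fun j _ => by ring
      _ = ∑ j, ∑ k, (r : ℂ) * (conj (v j) * H.adjugate j k * v k) := Finset.sum_comm
      _ = (r : ℂ) * ∑ j, ∑ k, conj (v j) * H.adjugate j k * v k := by
          rw [Finset.mul_sum]
          exact Finset.sum_congr rfl fun j _ => by rw [Finset.mul_sum]
      _ = (r : ℂ) * J := by rw [hJ]
  -- det ψ = J
  have hdetψ : ψ.det = J := by
    have hψeq : ψ = Matrix.of fun i =>
        if i ∈ (Finset.univ : Finset (Fin (n + 1))) then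
          H i + (((1 : ℂ) - (r : ℂ)) * v i) • (fun k => conj (v k)) else H i := by
      ext i k
      simp [hψ i k, mul_assoc]
    have hrow : ∀ i, det (H.updateRow i fun k => conj (v k)) = ∑ k, H.adjugate k i * conj (v k) := by
      intro i
      rw [← Matrix.cramer_transpose_apply, Matrix.cramer_eq_adjugate_mulVec]
      simp [Matrix.mulVec, dotProduct, ← Matrix.adjugate_transpose, Matrix.transpose_apply]
    rw [hψeq, aux_det_expand, hdetH]
    have : ∑ i, ((1 : ℂ) - (r : ℂ)) * v i * det (H.updateRow i fun k => conj (v k))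
        = ((1 : ℂ) - (r : ℂ)) * J := by
      calc ∑ i, ((1 : ℂ) - (r : ℂ)) * v i * det (H.updateRow i fun k => conj (v k))
          = ∑ i, ∑ k, ((1:ℂ) - (r:ℂ)) * (conj (v k) * H.adjugate k i * v i) := by
            refine Finset.sum_congr rfl fun i _ => ?_
            rw [hrow i, Finset.mul_sum]
            exact Finset.sum_congr rfl fun k _ => by ring
        _ = ∑ k, ∑ i, ((1:ℂ) - (r:ℂ)) * (conj (v k) * H.adjugate k i * v i) := Finset.sum_comm
        _ = ((1 : ℂ) - (r : ℂ)) * J := by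
            rw [hJ, Finset.mul_sum]
            exact Finset.sum_congr rfl fun k _ => by rw [Finset.mul_sum]
    rw [this]; ring
  have hψunit : IsUnit ψ.det := by rw [hdetψ]; exact isUnit_iff_ne_zero.mpr hJ0
  -- ψ *ᵥ conj ξ = v
  have hψξ : ∀ j, ∑ k, ψ j k * conj (ξ k) = v j := by
    intro j
    have hHξ : ∑ k, H j k * conj (ξ k) = (r : ℂ) * v j := by
      have := congrArg conj (hξH j)
      simpa [map_sum, hHerm, mul_comm] using this
    have hvξc : ∑ k, conj (v k) * conj (ξ k) = 1 := by
      have := congrArg conj hvξ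
      simpa [map_sum] using this
    calc ∑ k, ψ j k * conj (ξ k)
        = ∑ k, (H j k * conj (ξ k) + ((1:ℂ) - (r:ℂ)) * v j * (conj (v k) * conj (ξ k))) := by
          congr 1; ext k; rw [hψ j k]; ring
      _ = (∑ k, H j k * conj (ξ k)) + ((1:ℂ) - (r:ℂ)) * v j * ∑ k, conj (v k) * conj (ξ k) := by
          rw [Finset.sum_add_distrib, Finset.mul_sum]
      _ = (r : ℂ) * v j + ((1:ℂ) - (r:ℂ)) * v j * 1 := by rw [hHξ, hvξc]
      _ = v j := by ring
  -- P *ᵥ v = conj ξ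
  have hPv : ∀ j, ∑ k, P j k * v k = conj (ξ j) := by
    have hvec : ψ *ᵥ (fun k => conj (ξ k)) = v := by
      ext j; simpa [Matrix.mulVec, dotProduct] using hψξ j
    have : P *ᵥ v = fun k => conj (ξ k) := by
      rw [hP, ← hvec, Matrix.mulVec_mulVec, Matrix.nonsing_inv_mul ψ hψunit,
        Matrix.one_mulVec]
    intro j
    have := congrFun this j
    simpa [Matrix.mulVec, dotProduct] using this
  -- main computation
  intro β k
  induction k using Fin.lastCases with
  | last =>
    have hwk : (if w = Fin.last n then (1 : ℂ) else 0) = 1 := by simp [hw]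
    have hγk : ∀ γ : Fin n, (if γ.castSucc = Fin.last n then (1 : ℂ) else 0) = 0 := by
      intro γ
      simp [Fin.ne_of_lt (Fin.castSucc_lt_last γ)]
    -- ∑ over all of Q_j v_j = 0 where Q j = P β.castSucc j - conj(ξ β.castSucc) * ξ j
    have hsum0 : ∑ j, (P β.castSucc j - conj (ξ β.castSucc) * ξ j) * v j = 0 := by
      have h1 : ∑ j, P β.castSucc j * v j = conj (ξ β.castSucc) := hPv _
      have h2 : ∑ j, conj (ξ β.castSucc) * ξ j * v j = conj (ξ β.castSucc) := by
        calc ∑ j, conj (ξ β.castSucc) * ξ j * v j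
            = conj (ξ β.castSucc) * ∑ j, v j * ξ j := by
              rw [Finset.mul_sum]; congr 1; ext j; ring
          _ = conj (ξ β.castSucc) := by rw [hvξ, mul_one]
      calc ∑ j, (P β.castSucc j - conj (ξ β.castSucc) * ξ j) * v j
          = (∑ j, P β.castSucc j * v j) - ∑ j, conj (ξ β.castSucc) * ξ j * v j := by
            rw [← Finset.sum_sub_distrib]; congr 1; ext j; ring
        _ = 0 := by rw [h1, h2, sub_self]
    have hsplit : ∑ γ : Fin n, (P β.castSucc γ.castSucc - conj (ξ β.castSucc) * ξ γ.castSucc)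
          * v γ.castSucc
        = -((P β.castSucc (Fin.last n) - conj (ξ β.castSucc) * ξ (Fin.last n)) * v (Fin.last n)) := by
      have := Fin.sum_univ_castSucc
        (f := fun j => (P β.castSucc j - conj (ξ β.castSucc) * ξ j) * v j)
      rw [hsum0] at this
      linear_combination -this
    have hwlast : v w = v (Fin.last n) := by rw [hw]
    calc ∑ γ : Fin n, G β γ *
          ((if γ.castSucc = Fin.last n then (1 : ℂ) else 0)
            - v γ.castSucc / v w * (if w = Fin.last n then (1 : ℂ) else 0))
        = ∑ γ : Fin n, -(G β γ * v γ.castSucc) / v w := by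
          congr 1; ext γ
          rw [hγk γ, hwk]
          field_simp
          ring
      _ = -(∑ γ : Fin n, (P β.castSucc γ.castSucc - conj (ξ β.castSucc) * ξ γ.castSucc)
            * v γ.castSucc) / v w := by
          rw [← Finset.sum_div, ← Finset.sum_neg_distrib]
          congr 1; congr 1; ext γ; rw [hG β γ]
      _ = P β.castSucc (Fin.last n) - conj (ξ β.castSucc) * ξ (Fin.last n) := by
          have hv0 : v (Fin.last n) ≠ 0 := by rw [← hwlast]; exact hvw
          rw [hsplit, hwlast]
          field_simp
  | cast γ₀ =>
    have hwk : (if w = γ₀.castSucc then (1 : ℂ) else 0) = 0 := by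
      rw [hw]
      simp [(Fin.ne_of_lt (Fin.castSucc_lt_last γ₀)).symm]
    have : ∀ γ : Fin n, (if γ.castSucc = γ₀.castSucc then (1 : ℂ) else 0)
        = if γ = γ₀ then 1 else 0 := by
      intro γ
      simp [Fin.castSucc_inj]
    calc ∑ γ : Fin n, G β γ *
          ((if γ.castSucc = γ₀.castSucc then (1 : ℂ) else 0)
            - v γ.castSucc / v w * (if w = γ₀.castSucc then (1 : ℂ) else 0))
        = ∑ γ : Fin n, G β γ * (if γ = γ₀ then 1 else 0) := by
          rw [hwk]; congr 1; ext γ; rw [this γ]; ring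
      _ = G β γ₀ := by simp
      _ = P β.castSucc γ₀.castSucc - conj (ξ β.castSucc) * ξ γ₀.castSucc := hG β γ₀
end

section
/- Assume J ≠ 0, set P := ψ^{-1} and G_{βα} := P_{βα} − conj(ξ_β)·ξ_α for α, β ∈ {1,…,n}. Then for all j, k ∈ {1,…,n+1}: ∑_{α,β=1}^n G_{βα}·(δ_{αj} − (v_α/v_w)·δ_{wj})·(δ_{βk} − (conj(v_β)/conj(v_w))·δ_{wk}) = P_{kj} − ξ_j·conj(ξ_k). (This is the coefficient identity −h^{β̄α} D^ρ_{αβ̄} = (ξ^j ξ^{k̄} − ψ^{k̄j}) ∂_j ∂_{k̄} used in the proof of the Webster scalar curvature formula, Proposition 4.1 of the paper.) -/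
open ComplexConjugate Matrix



lemma detAux1 {m : Type*} [Fintype m] [DecidableEq m] (A : Matrix m m ℂ) (u w : m → ℂ)
    (a : m) (S : Finset m) (ha : a ∉ S) :
    ((Matrix.of fun i j => A i j + if j ∈ S then u i * w j else 0).updateCol a u).det
      = (A.updateCol a u).det := by
  induction S using Finset.induction_on with
  | empty => congr 1; ext i j; simp [Matrix.updateCol_apply]
  | @insert b S hb ih =>
    have hab : a ≠ b := by rintro rfl; exact ha (Finset.mem_insert_self _ _)
    have haS : a ∉ S := fun h => ha (Finset.mem_insert_of_mem h)
    set N := ((Matrix.of fun i j => A i j + if j ∈ S then u i * w j else 0).updateCol a u)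
      with hN
    have key : (Matrix.of fun i j => A i j + if j ∈ insert b S then u i * w j else 0).updateCol a u
        = N.updateCol b (fun k => N k b + w b • N k a) := by
      ext i j
      by_cases hj : j = a
      · subst hj
        simp [hN, Matrix.updateCol_apply, hab, hab.symm]
      · by_cases hjb : j = b
        · subst hjb
          simp [hN, Matrix.updateCol_apply, hj, hb, hab.symm, Ne.symm hj, smul_eq_mul]
          try ring
        · simp [hN, Matrix.updateCol_apply, hj, hjb, Finset.mem_insert]
    rw [key, Matrix.det_updateCol_add_smul_self N (Ne.symm hab), ih haS]

lemma detAux2 {m : Type*} [Fintype m] [DecidableEq m] (A : Matrix m m ℂ) (u w : m → ℂ)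
    (S : Finset m) :
    (Matrix.of fun i j => A i j + if j ∈ S then u i * w j else 0).det
      = A.det + ∑ k ∈ S, w k * (A.updateCol k u).det := by
  induction S using Finset.induction_on with
  | empty => simp; congr 1
  | @insert a S ha ih =>
    have h1 : (Matrix.of fun i j => A i j + if j ∈ insert a S then u i * w j else 0)
        = (Matrix.of fun i j => A i j + if j ∈ S then u i * w j else 0).updateCol a
            ((fun i => A i a) + (w a • u)) := by
      ext i j
      by_cases hj : j = a
      · subst hj; simp [Matrix.updateCol_apply, ha, smul_eq_mul]; ring
      · simp [Matrix.updateCol_apply, hj, Finset.mem_insert]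
    rw [h1, Matrix.det_updateCol_add, Matrix.det_updateCol_smul, detAux1 A u w a S ha]
    have h2 : (Matrix.of fun i j => A i j + if j ∈ S then u i * w j else 0).updateCol a
        (fun i => A i a) = (Matrix.of fun i j => A i j + if j ∈ S then u i * w j else 0) := by
      ext i j
      by_cases hj : j = a
      · subst hj; simp [Matrix.updateCol_apply, ha]
      · simp [Matrix.updateCol_apply, hj]
    rw [h2, ih, Finset.sum_insert ha]
    ring

lemma det_add_outer {m : Type*} [Fintype m] [DecidableEq m] (A : Matrix m m ℂ) (u w : m → ℂ) :
    (Matrix.of fun i j => A i j + u i * w j).det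
      = A.det + ∑ k, w k * (A.updateCol k u).det := by
  have := detAux2 A u w Finset.univ
  simpa using this


/-- With `P := ψ⁻¹` and `G_{βα} := P_{βα} − conj(ξ_β)·ξ_α`, for all
`j, k ∈ {1,…,n+1}`:
`∑_{α,β} G_{βα}·(δ_{αj} − (v_α/v_w)δ_{wj})·(δ_{βk} − (conj(v_β)/conj(v_w))δ_{wk})
  = P_{kj} − ξ_j·conj(ξ_k)`,
the coefficient identity `−h^{β̄α} D^ρ_{αβ̄} = (ξ^j ξ^{k̄} − ψ^{k̄j}) ∂_j ∂_{k̄}`. -/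
theorem stmt_10 (n : ℕ) (hn : 1 ≤ n)
    (H : Matrix (Fin (n + 1)) (Fin (n + 1)) ℂ) (v ξ : Fin (n + 1) → ℂ) (r : ℝ)
    (hξH : ∀ k, ∑ j, ξ j * H j k = (r : ℂ) * conj (v k))
    (hvξ : ∑ j, v j * ξ j = 1)
    (hHerm : ∀ j k, conj (H j k) = H k j)
    (J : ℂ) (hJ : J = ∑ j, ∑ k, conj (v j) * H.adjugate j k * v k)
    (hJ0 : J ≠ 0)
    (ψ : Matrix (Fin (n + 1)) (Fin (n + 1)) ℂ)
    (hψ : ∀ j k, ψ j k = H j k + ((1 : ℂ) - (r : ℂ)) * v j * conj (v k))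
    (P : Matrix (Fin (n + 1)) (Fin (n + 1)) ℂ) (hP : P = ψ⁻¹)
    (w : Fin (n + 1)) (hw : w = Fin.last n)
    (hvw : v w ≠ 0)
    (G : Matrix (Fin n) (Fin n) ℂ)
    (hG : ∀ β α : Fin n, G β α = P β.castSucc α.castSucc - conj (ξ β.castSucc) * ξ α.castSucc) :
    ∀ j k : Fin (n + 1),
      ∑ α : Fin n, ∑ β : Fin n, G β α *
        ((if α.castSucc = j then (1 : ℂ) else 0) - (v α.castSucc / v w) * (if w = j then (1 : ℂ) else 0)) *
        ((if β.castSucc = k then (1 : ℂ) else 0) -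
          (conj (v β.castSucc) / conj (v w)) * (if w = k then (1 : ℂ) else 0)) =
        P k j - ξ j * conj (ξ k) := by
  -- basic conjugation facts
  have hξv : ∑ j, ξ j * v j = 1 := by
    rw [← hvξ]; exact Finset.sum_congr rfl fun j _ => mul_comm _ _
  -- det H = r * J
  have hξHv : ξ ᵥ* H = fun k => (r : ℂ) * conj (v k) := by
    funext k
    simpa [Matrix.vecMul, dotProduct] using hξH k
  have h4 : ∀ k, ∑ j, ((r:ℂ) * conj (v j)) * H.adjugate j k = H.det * ξ k := by
    intro k
    have e1 : ((ξ ᵥ* H) ᵥ* H.adjugate) k = ∑ j, ((r:ℂ) * conj (v j)) * H.adjugate j k := by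
      rw [hξHv]; simp [Matrix.vecMul, dotProduct]
    have e2 : ((ξ ᵥ* H) ᵥ* H.adjugate) k = H.det * ξ k := by
      rw [Matrix.vecMul_vecMul, Matrix.mul_adjugate]
      simp [Matrix.vecMul, dotProduct, Matrix.smul_apply, Matrix.one_apply, mul_ite,
        Finset.sum_ite_eq', mul_comm]
    rw [← e1, e2]
  have hdetH : H.det = (r : ℂ) * J := by
    have : (r:ℂ) * J = ∑ k, (∑ j, ((r:ℂ) * conj (v j)) * H.adjugate j k) * v k := by
      calc (r:ℂ) * J = ∑ j, ∑ k, ((r:ℂ) * conj (v j)) * H.adjugate j k * v k := by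
            rw [hJ, Finset.mul_sum]
            refine Finset.sum_congr rfl fun j _ => ?_
            rw [Finset.mul_sum]
            exact Finset.sum_congr rfl fun k _ => by ring
        _ = ∑ k, ∑ j, ((r:ℂ) * conj (v j)) * H.adjugate j k * v k := Finset.sum_comm
        _ = ∑ k, (∑ j, ((r:ℂ) * conj (v j)) * H.adjugate j k) * v k := by
            refine Finset.sum_congr rfl fun k _ => ?_
            rw [Finset.sum_mul]
    rw [this]
    have : ∑ k, (∑ j, ((r:ℂ) * conj (v j)) * H.adjugate j k) * v k
        = ∑ k, (H.det * ξ k) * v k := by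
      apply Finset.sum_congr rfl; intro k _; rw [h4 k]
    rw [this]
    have : ∑ k, (H.det * ξ k) * v k = H.det * ∑ k, ξ k * v k := by
      rw [Finset.mul_sum]; apply Finset.sum_congr rfl; intro k _; ring
    rw [this, hξv, mul_one]
  -- det ψ = J
  have hJ' : J = ∑ k, conj (v k) * (H.updateCol k v).det := by
    rw [hJ]
    apply Finset.sum_congr rfl; intro j _
    have : (H.updateCol j v).det = Matrix.cramer H v j := (Matrix.cramer_apply H v j).symm
    rw [this, Matrix.cramer_eq_adjugate_mulVec]
    simp [Matrix.mulVec, dotProduct, Finset.mul_sum, mul_assoc]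
  have hψdet : ψ.det = J := by
    have h1 : ψ = Matrix.of fun j k => H j k + (((1:ℂ) - (r:ℂ)) * v j) * conj (v k) := by
      ext j k; rw [hψ]; simp [mul_assoc]
    rw [h1, det_add_outer]
    have h2 : ∀ k : Fin (n+1), (H.updateCol k fun j => ((1:ℂ) - (r:ℂ)) * v j).det
        = ((1:ℂ) - (r:ℂ)) * (H.updateCol k v).det := by
      intro k
      exact Matrix.det_updateCol_smul H k ((1:ℂ) - (r:ℂ)) v
    have h3 : ∑ k, conj (v k) * (H.updateCol k fun j => ((1:ℂ) - (r:ℂ)) * v j).det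
        = ((1:ℂ) - (r:ℂ)) * ∑ k, conj (v k) * (H.updateCol k v).det := by
      rw [Finset.mul_sum]
      apply Finset.sum_congr rfl; intro k _; rw [h2 k]; ring
    rw [h3, ← hJ', hdetH]; ring
  have hψunit : IsUnit ψ.det := by rw [hψdet]; exact isUnit_iff_ne_zero.mpr hJ0
  have hψP : ψ * P = 1 := by rw [hP]; exact Matrix.mul_nonsing_inv ψ hψunit
  have hPψ : P * ψ = 1 := by rw [hP]; exact Matrix.nonsing_inv_mul ψ hψunit
  -- ξ ᵥ* ψ = conj v
  have hξψ : ∀ k, ∑ j, ξ j * ψ j k = conj (v k) := by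
    intro k
    have : ∑ j, ξ j * ψ j k = (∑ j, ξ j * H j k) + (∑ j, (((1:ℂ) - (r:ℂ)) * conj (v k)) * (v j * ξ j)) := by
      rw [← Finset.sum_add_distrib]
      apply Finset.sum_congr rfl; intro j _; rw [hψ]; ring
    rw [this, hξH k, ← Finset.mul_sum, hvξ]; ring
  -- hvP : conj v ᵥ* P = ξ
  have hvP : ∀ a, ∑ b, conj (v b) * P b a = ξ a := by
    intro a
    have e1 : ((fun k => conj (v k)) ᵥ* P) a = ∑ b, conj (v b) * P b a := by
      simp [Matrix.vecMul, dotProduct]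
    have e2 : (fun k => conj (v k)) = ξ ᵥ* ψ := by
      funext k; rw [← hξψ k]; simp [Matrix.vecMul, dotProduct]
    have e3 : ((fun k => conj (v k)) ᵥ* P) a = ξ a := by
      rw [e2, Matrix.vecMul_vecMul, hψP, Matrix.vecMul_one]
    rw [← e1, e3]
  -- ψ *ᵥ conj ξ = v, hence P *ᵥ v = conj ξ
  have hψconjξ : ∀ k, ∑ j, ψ k j * conj (ξ j) = v k := by
    intro k
    have := congrArg conj (hξψ k)
    rw [map_sum, Complex.conj_conj] at this
    rw [← this]
    apply Finset.sum_congr rfl; intro j _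
    rw [_root_.map_mul]
    have hψH : conj (ψ j k) = ψ k j := by
      rw [hψ, hψ, map_add, hHerm]
      simp only [_root_.map_mul, map_sub, _root_.map_one, Complex.conj_conj, Complex.conj_ofReal]
      ring
    rw [hψH]; ring
  have hPv : ∀ b, ∑ a, P b a * v a = conj (ξ b) := by
    intro b
    have e1 : (P *ᵥ v) b = ∑ a, P b a * v a := by simp [Matrix.mulVec, dotProduct]
    have e2 : v = ψ *ᵥ (fun j => conj (ξ j)) := by
      funext k; rw [← hψconjξ k]; simp [Matrix.mulVec, dotProduct]
    have e3 : (P *ᵥ v) b = conj (ξ b) := by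
      rw [e2, Matrix.mulVec_mulVec, hPψ, Matrix.one_mulVec]
    rw [← e1, e3]
  -- kernel facts for Q
  have hQv : ∀ b, ∑ a, (P b a - ξ a * conj (ξ b)) * v a = 0 := by
    intro b
    calc ∑ a, (P b a - ξ a * conj (ξ b)) * v a
        = ∑ a, (P b a * v a - (v a * ξ a) * conj (ξ b)) :=
          Finset.sum_congr rfl fun a _ => by ring
      _ = (∑ a, P b a * v a) - ∑ a, (v a * ξ a) * conj (ξ b) := Finset.sum_sub_distrib _ _
      _ = conj (ξ b) - (∑ a, v a * ξ a) * conj (ξ b) := by rw [hPv b, Finset.sum_mul]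
      _ = 0 := by rw [hvξ]; ring
  have hvQ : ∀ a, ∑ b, conj (v b) * (P b a - ξ a * conj (ξ b)) = 0 := by
    intro a
    have hc : ∑ b, conj (v b) * conj (ξ b) = 1 := by
      have := congrArg conj hvξ
      rw [map_sum, _root_.map_one] at this
      rw [← this]
      apply Finset.sum_congr rfl; intro b _; rw [_root_.map_mul]
    calc ∑ b, conj (v b) * (P b a - ξ a * conj (ξ b))
        = ∑ b, (conj (v b) * P b a - ξ a * (conj (v b) * conj (ξ b))) :=
          Finset.sum_congr rfl fun b _ => by ring
      _ = (∑ b, conj (v b) * P b a) - ∑ b, ξ a * (conj (v b) * conj (ξ b)) := Finset.sum_sub_distrib _ _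
      _ = ξ a - ξ a * ∑ b, conj (v b) * conj (ξ b) := by rw [hvP a, ← Finset.mul_sum]
      _ = 0 := by rw [hc]; ring
  intro j k
  set c : Fin (n+1) → ℂ := fun a => (if a = j then (1:ℂ) else 0) - (v a / v w) * (if w = j then 1 else 0) with hc
  set d : Fin (n+1) → ℂ := fun b => (if b = k then (1:ℂ) else 0) - (conj (v b) / conj (v w)) * (if w = k then 1 else 0) with hd
  have hvw' : conj (v w) ≠ 0 := by
    intro h; apply hvw
    have := congrArg conj h
    rwa [Complex.conj_conj, map_zero] at this
  have hcw : c w = 0 := by simp [hc, div_self hvw]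
  have hdw : d w = 0 := by simp [hd, div_self hvw']
  -- key row sum
  have key : ∀ b, ∑ a, (P b a - ξ a * conj (ξ b)) * c a = P b j - ξ j * conj (ξ b) := by
    intro b
    have expand : ∀ a, (P b a - ξ a * conj (ξ b)) * c a
        = (if a = j then (P b a - ξ a * conj (ξ b)) else 0)
          - ((if w = j then (1:ℂ) else 0) / v w) * ((P b a - ξ a * conj (ξ b)) * v a) := by
      intro a
      by_cases h1 : a = j <;> by_cases h2 : w = j <;> simp [hc, h1, h2] <;> ring
    rw [Finset.sum_congr rfl fun a _ => expand a, Finset.sum_sub_distrib]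
    rw [← Finset.mul_sum, hQv b, mul_zero, sub_zero]
    simp
  have key2 : ∑ b, (P b j - ξ j * conj (ξ b)) * d b = P k j - ξ j * conj (ξ k) := by
    have expand : ∀ b, (P b j - ξ j * conj (ξ b)) * d b
        = (if b = k then (P b j - ξ j * conj (ξ b)) else 0)
          - ((if w = k then (1:ℂ) else 0) / conj (v w)) * (conj (v b) * (P b j - ξ j * conj (ξ b))) := by
      intro b
      by_cases h1 : b = k <;> by_cases h2 : w = k <;> simp [hd, h1, h2] <;> ring
    rw [Finset.sum_congr rfl fun b _ => expand b, Finset.sum_sub_distrib]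
    rw [← Finset.mul_sum, hvQ j, mul_zero, sub_zero]
    simp
  -- assemble
  set F : Fin (n+1) → ℂ := fun a => ∑ b, (P b a - ξ a * conj (ξ b)) * c a * d b with hF
  have hc' : ∀ a, c a = (if a = j then (1:ℂ) else 0) - (v a / v w) * (if w = j then 1 else 0) :=
    fun a => rfl
  have hd' : ∀ b, d b = (if b = k then (1:ℂ) else 0) - (conj (v b) / conj (v w)) * (if w = k then 1 else 0) :=
    fun b => rfl
  have perα : ∀ α : Fin n, (∑ β : Fin n, G β α *
        ((if α.castSucc = j then (1 : ℂ) else 0) - (v α.castSucc / v w) * (if w = j then (1 : ℂ) else 0)) *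
        ((if β.castSucc = k then (1 : ℂ) else 0) -
          (conj (v β.castSucc) / conj (v w)) * (if w = k then (1 : ℂ) else 0)))
      = F α.castSucc := by
    intro α
    have e : (∑ β : Fin n, G β α *
        ((if α.castSucc = j then (1 : ℂ) else 0) - (v α.castSucc / v w) * (if w = j then (1 : ℂ) else 0)) *
        ((if β.castSucc = k then (1 : ℂ) else 0) -
          (conj (v β.castSucc) / conj (v w)) * (if w = k then (1 : ℂ) else 0)))
        = ∑ β : Fin n, (P β.castSucc α.castSucc - ξ α.castSucc * conj (ξ β.castSucc)) * c α.castSucc * d β.castSucc := by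
      apply Finset.sum_congr rfl; intro β _
      rw [hG, hc' α.castSucc, hd' β.castSucc]
      ring
    rw [e]
    rw [show F α.castSucc = ∑ b : Fin (n+1),
      (P b α.castSucc - ξ α.castSucc * conj (ξ b)) * c α.castSucc * d b from rfl]
    rw [Fin.sum_univ_castSucc
      (f := fun b : Fin (n+1) => (P b α.castSucc - ξ α.castSucc * conj (ξ b)) * c α.castSucc * d b)]
    rw [← hw, hdw, mul_zero, add_zero]
  have hFw : F w = 0 := by
    show (∑ b, (P b w - ξ w * conj (ξ b)) * c w * d b) = 0
    apply Finset.sum_eq_zero; intro b _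
    rw [hcw]; ring
  have final : ∑ a : Fin (n+1), F a = P k j - ξ j * conj (ξ k) := by
    show (∑ a : Fin (n+1), ∑ b, (P b a - ξ a * conj (ξ b)) * c a * d b) = _
    rw [Finset.sum_comm]
    have e : ∀ b, (∑ a, (P b a - ξ a * conj (ξ b)) * c a * d b)
        = (P b j - ξ j * conj (ξ b)) * d b := by
      intro b
      rw [← Finset.sum_mul, key b]
    rw [Finset.sum_congr rfl fun b _ => e b, key2]
  rw [Finset.sum_congr rfl fun α _ => perα α]
  rw [show (∑ α : Fin n, F α.castSucc) = ∑ a : Fin (n+1), F a by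
    rw [Fin.sum_univ_castSucc (f := F), ← hw, hFw, add_zero]]
  exact final
end

section
/- Let Ω ⊆ ℂ^{n+1} be open, let ν > 0 and N > 0 be real, let ρ : Ω → ℝ be C² with ρ + ν > 0 on Ω, let ψ : Ω → ℝ be a C² pluriharmonic function, and let f^1,…,f^K : Ω → ℂ be holomorphic with (ρ + ν)^N = ψ + ∑_{μ=1}^K |f^μ|² on Ω. Then for every p ∈ Ω with ρ(p) = 0 and all a, b ∈ ℂ^{n+1}: N·ν^{N−2}·(ν·H^ρ_p(a,b) + (N−1)·∂ρ_p(a)·conj(∂ρ_p(b))) = ∑_{μ=1}^K Df^μ_p(a)·conj(Df^μ_p(b)), where Df^μ_p denotes the complex Fréchet derivative. (This is the second-order differentiated identity — in coordinates, N ν^{N−2}(ν ρ_{jk̄} + (N−1) ρ_j ρ_{k̄}) = ∑_μ f^{(μ)}_j f̄^{(μ)}_{k̄} on M — used in the proof of Theorem 1.1 of the paper.) -/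
/-!
Put `h := (ρ + ν)^N - ψ`. It is `C²`, and near `p` it equals `∑ μ, |f^μ|²`. Since `ψ` is
pluriharmonic, `H^h = H^{(ρ+ν)^N}`, and the chain rule at a point where `ρ = 0` turns the latter
into the left-hand side. For the right-hand side, restrict `h` to a complex line `z ↦ p + z a`:
there the `f^μ` are holomorphic functions of one variable, hence analytic, and the Laplacian of
`|g|²` is `4 |g'|²`. This gives `H^h_p(a,a) = ∑ μ, |Df^μ_p(a)|²`, and both sides are sesquilinear
in `(a,b)`, so polarization gives the identity for all `a, b`.
-/

open ComplexConjugate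

/-- Wirtinger derivative `∂u_p(a) = (1/2)(Du_p(a) − i·Du_p(i·a))` of a real-valued
function on an open subset of `ℂ^m`, via the real Fréchet derivative. -/
noncomputable def wirtingerDeriv {m : ℕ} (u : (Fin m → ℂ) → ℝ) (p a : Fin m → ℂ) : ℂ :=
  (1 / 2 : ℂ) * (((fderiv ℝ u p a : ℝ) : ℂ) - Complex.I * ((fderiv ℝ u p (Complex.I • a) : ℝ) : ℂ))

/-- Mixed complex Hessian
`H^u_p(a,b) = (1/4)(D²u_p(a,b) + D²u_p(ia,ib)) + (i/4)(D²u_p(a,ib) − D²u_p(ia,b))`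
of a real-valued function, via the second real Fréchet derivative. -/
noncomputable def mixedComplexHessian {m : ℕ} (u : (Fin m → ℂ) → ℝ) (p a b : Fin m → ℂ) : ℂ :=
  (1 / 4 : ℂ) * (((fderiv ℝ (fderiv ℝ u) p a b : ℝ) : ℂ)
      + ((fderiv ℝ (fderiv ℝ u) p (Complex.I • a) (Complex.I • b) : ℝ) : ℂ))
    + (Complex.I / 4) * (((fderiv ℝ (fderiv ℝ u) p a (Complex.I • b) : ℝ) : ℂ)
      - ((fderiv ℝ (fderiv ℝ u) p (Complex.I • a) b : ℝ) : ℂ))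

open Filter Topology

section SecondDerivative

variable {𝕜 E F : Type*} [NontriviallyNormedField 𝕜] [NormedAddCommGroup E] [NormedSpace 𝕜 E]
  [NormedAddCommGroup F] [NormedSpace 𝕜 F] {u : E → F} {p : E}

theorem fderiv_fderiv_apply_of_eventuallyEq {φ : E → F} {w : E} {L : E →L[𝕜] F}
    (hu : DifferentiableAt 𝕜 (fderiv 𝕜 u) p) (hφ : HasFDerivAt φ L p)
    (hev : (fun x => fderiv 𝕜 u x w) =ᶠ[𝓝 p] φ) (v : E) :
    fderiv 𝕜 (fderiv 𝕜 u) p v w = L v := by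
  have hw : HasFDerivAt (fun x => fderiv 𝕜 u x w)
      ((ContinuousLinearMap.apply 𝕜 F w).comp (fderiv 𝕜 (fderiv 𝕜 u) p)) p :=
    (ContinuousLinearMap.apply 𝕜 F w).hasFDerivAt.comp p hu.hasFDerivAt
  exact congr($((hw.congr_of_eventuallyEq hev.symm).unique hφ) v)

theorem ContDiffAt.differentiableAt_fderiv (hu : ContDiffAt 𝕜 2 u p) :
    DifferentiableAt 𝕜 (fderiv 𝕜 u) p :=
  (hu.fderiv_right (m := 1) (by norm_num)).differentiableAt one_ne_zero

theorem ContDiffAt.hasFDerivAt_fderiv_apply (hu : ContDiffAt 𝕜 2 u p) (w : E) :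
    HasFDerivAt (fun x => fderiv 𝕜 u x w)
      ((ContinuousLinearMap.apply 𝕜 F w).comp (fderiv 𝕜 (fderiv 𝕜 u) p)) p :=
  (ContinuousLinearMap.apply 𝕜 F w).hasFDerivAt.comp p hu.differentiableAt_fderiv.hasFDerivAt

theorem ContDiffAt.eventually_differentiableAt (hu : ContDiffAt 𝕜 2 u p) :
    ∀ᶠ x in 𝓝 p, DifferentiableAt 𝕜 u x :=
  (hu.eventually (by simp)).mono fun _ hx => hx.differentiableAt (by norm_num)

theorem fderiv_fderiv_sub {v : E → F} (hu : ContDiffAt 𝕜 2 u p) (hv : ContDiffAt 𝕜 2 v p) :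
    fderiv 𝕜 (fderiv 𝕜 fun x => u x - v x) p
      = fderiv 𝕜 (fderiv 𝕜 u) p - fderiv 𝕜 (fderiv 𝕜 v) p := by
  have hev : fderiv 𝕜 (fun x => u x - v x) =ᶠ[𝓝 p] fun x => fderiv 𝕜 u x - fderiv 𝕜 v x := by
    filter_upwards [hu.eventually_differentiableAt, hv.eventually_differentiableAt] with x hux hvx
    exact fderiv_fun_sub hux hvx
  rw [hev.fderiv_eq, fderiv_fun_sub hu.differentiableAt_fderiv hv.differentiableAt_fderiv]

theorem fderiv_fderiv_sum {ι : Type*} {s : Finset ι} {u : ι → E → F}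
    (hu : ∀ i ∈ s, ContDiffAt 𝕜 2 (u i) p) :
    fderiv 𝕜 (fderiv 𝕜 fun x => ∑ i ∈ s, u i x) p = ∑ i ∈ s, fderiv 𝕜 (fderiv 𝕜 (u i)) p := by
  have hev : fderiv 𝕜 (fun x => ∑ i ∈ s, u i x) =ᶠ[𝓝 p] fun x => ∑ i ∈ s, fderiv 𝕜 (u i) x := by
    filter_upwards [(s.eventually_all).2 fun i hi => (hu i hi).eventually_differentiableAt]
      with x hx
    exact fderiv_fun_sum hx
  rw [hev.fderiv_eq, fderiv_fun_sum fun i hi => (hu i hi).differentiableAt_fderiv]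

theorem fderiv_fderiv_comp_apply {u : E → 𝕜} {φ φ' : 𝕜 → 𝕜} {φ'' : 𝕜}
    (hu : ContDiffAt 𝕜 2 u p) (hφ : ∀ᶠ t in 𝓝 (u p), HasDerivAt φ (φ' t) t)
    (hφ' : HasDerivAt φ' φ'' (u p)) (v w : E) :
    fderiv 𝕜 (fderiv 𝕜 fun x => φ (u x)) p v w
      = φ'' * (fderiv 𝕜 u p v * fderiv 𝕜 u p w) + φ' (u p) * fderiv 𝕜 (fderiv 𝕜 u) p v w := by
  have hev : fderiv 𝕜 (fun x => φ (u x)) =ᶠ[𝓝 p] fun x => φ' (u x) • fderiv 𝕜 u x := by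
    filter_upwards [hu.continuousAt.eventually hφ, hu.eventually_differentiableAt] with x hφx hux
    exact (hφx.comp_hasFDerivAt x hux.hasFDerivAt).fderiv
  have hΦ := (hφ'.comp_hasFDerivAt p (hu.differentiableAt (by norm_num)).hasFDerivAt).smul
    hu.differentiableAt_fderiv.hasFDerivAt
  rw [(hΦ.congr_of_eventuallyEq hev).fderiv]
  simp only [add_apply, smul_apply, Function.comp_apply, ContinuousLinearMap.smulRight_apply,
    smul_eq_mul]
  ring

theorem fderiv_fderiv_comp_const_add_apply {G : Type*} [NormedAddCommGroup G] [NormedSpace 𝕜 G]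
    (hu : ContDiffAt 𝕜 2 u p) (A : G →L[𝕜] E) (v w : G) :
    fderiv 𝕜 (fderiv 𝕜 fun z => u (p + A z)) 0 v w = fderiv 𝕜 (fderiv 𝕜 u) p (A v) (A w) := by
  have hline : ∀ z, HasFDerivAt (fun z => p + A z) A z := fun z => A.hasFDerivAt.const_add p
  have htend : Tendsto (fun z => p + A z) (𝓝 0) (𝓝 p) := by
    simpa using (hline 0).continuousAt.tendsto
  have hu' : ContDiffAt 𝕜 2 u (p + A 0) := by simpa using hu
  have hev : (fun z => fderiv 𝕜 (fun z => u (p + A z)) z w) =ᶠ[𝓝 0]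
      fun z => fderiv 𝕜 u (p + A z) (A w) := by
    filter_upwards [htend.eventually hu.eventually_differentiableAt] with z hz
    exact congr($((hz.hasFDerivAt.comp z (hline z)).fderiv) w)
  have hΦ := (hu'.hasFDerivAt_fderiv_apply (A w)).comp (0 : G) (hline 0)
  have hC2 : ContDiffAt 𝕜 2 (fun z => u (p + A z)) 0 :=
    hu'.comp 0 (contDiff_const.add A.contDiff).contDiffAt
  rw [fderiv_fderiv_apply_of_eventuallyEq hC2.differentiableAt_fderiv hΦ hev]
  simp

end SecondDerivative

theorem fderiv_fderiv_norm_sq_apply {E F : Type*} [NormedAddCommGroup E] [NormedSpace ℝ E]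
    [NormedAddCommGroup F] [InnerProductSpace ℝ F] {g : E → F} {p : E}
    (hg : ContDiffAt ℝ 2 g p) (v w : E) :
    fderiv ℝ (fderiv ℝ fun x => ‖g x‖ ^ 2) p v w
      = 2 * (inner ℝ (fderiv ℝ g p v) (fderiv ℝ g p w)
        + inner ℝ (g p) (fderiv ℝ (fderiv ℝ g) p v w)) := by
  have hev : (fun x => fderiv ℝ (fun x => ‖g x‖ ^ 2) x w) =ᶠ[𝓝 p]
      fun x => 2 * inner ℝ (g x) (fderiv ℝ g x w) := by
    filter_upwards [hg.eventually_differentiableAt] with x hx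
    rw [hx.hasFDerivAt.norm_sq.fderiv]
    simp
  have hΦ := ((hg.differentiableAt (by norm_num)).hasFDerivAt.inner ℝ
    (hg.hasFDerivAt_fderiv_apply w)).const_mul (2 : ℝ)
  rw [fderiv_fderiv_apply_of_eventuallyEq (hg.norm_sq ℝ).differentiableAt_fderiv hΦ hev]
  simp [fderivInnerCLM_apply]
  ring

section Holomorphic

variable {E : Type*} [NormedAddCommGroup E] [NormedSpace ℂ E] {g : E → ℂ} {p : E}

theorem fderiv_fderiv_apply_I_smul_right (hg : ∀ᶠ x in 𝓝 p, DifferentiableAt ℂ g x)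
    (hg₂ : ContDiffAt ℝ 2 g p) (v w : E) :
    fderiv ℝ (fderiv ℝ g) p v (Complex.I • w) = Complex.I * fderiv ℝ (fderiv ℝ g) p v w := by
  have hev : (fun x => fderiv ℝ g x (Complex.I • w)) =ᶠ[𝓝 p]
      fun x => Complex.I * fderiv ℝ g x w := by
    filter_upwards [hg] with x hx
    simp [hx.fderiv_restrictScalars ℝ]
  rw [fderiv_fderiv_apply_of_eventuallyEq hg₂.differentiableAt_fderiv
    ((hg₂.hasFDerivAt_fderiv_apply w).const_mul Complex.I) hev]
  simp

theorem fderiv_fderiv_I_smul_I_smul (hg : ∀ᶠ x in 𝓝 p, DifferentiableAt ℂ g x)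
    (hg₂ : ContDiffAt ℝ 2 g p) (v w : E) :
    fderiv ℝ (fderiv ℝ g) p (Complex.I • v) (Complex.I • w) = -fderiv ℝ (fderiv ℝ g) p v w := by
  -- symmetry of `D²g` moves each `i` into the second slot, where `D²g` is `ℂ`-linear
  have hsymm := hg₂.isSymmSndFDerivAt (by simp)
  rw [fderiv_fderiv_apply_I_smul_right hg hg₂, hsymm, fderiv_fderiv_apply_I_smul_right hg hg₂,
    hsymm, ← mul_assoc, Complex.I_mul_I, neg_one_mul]

theorem fderiv_fderiv_norm_sq_add_I_smul (hg : ∀ᶠ x in 𝓝 p, DifferentiableAt ℂ g x)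
    (hg₂ : ContDiffAt ℝ 2 g p) (v : E) :
    fderiv ℝ (fderiv ℝ fun x => ‖g x‖ ^ 2) p v v
        + fderiv ℝ (fderiv ℝ fun x => ‖g x‖ ^ 2) p (Complex.I • v) (Complex.I • v)
      = 4 * ‖fderiv ℂ g p v‖ ^ 2 := by
  simp only [fderiv_fderiv_norm_sq_apply hg₂, fderiv_fderiv_I_smul_I_smul hg hg₂,
    hg.self_of_nhds.fderiv_restrictScalars ℝ, ContinuousLinearMap.coe_restrictScalars',
    map_smul, smul_eq_mul, inner_neg_right, real_inner_self_eq_norm_sq, norm_mul, Complex.norm_I]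
  ring

theorem fderiv_fderiv_add_I_smul_of_eventuallyEq_sum_norm_sq {ι : Type*} [Fintype ι] {h : E → ℝ}
    {f : ι → E → ℂ} (hh : ContDiffAt ℝ 2 h p)
    (hf : ∀ i, ∀ᶠ x in 𝓝 p, DifferentiableAt ℂ (f i) x)
    (heq : h =ᶠ[𝓝 p] fun x => ∑ i, ‖f i x‖ ^ 2) (a : E) :
    fderiv ℝ (fderiv ℝ h) p a a + fderiv ℝ (fderiv ℝ h) p (Complex.I • a) (Complex.I • a)
      = 4 * ∑ i, ‖fderiv ℂ (f i) p a‖ ^ 2 := by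
  let A : ℂ →L[ℝ] E := (ContinuousLinearMap.id ℝ ℂ).smulRight a
  have hline : ∀ z : ℂ, HasDerivAt (fun z : ℂ => p + z • a) a z := fun z => by
    simpa using ((hasDerivAt_id z).smul_const a).const_add p
  have htend : Tendsto (fun z : ℂ => p + z • a) (𝓝 0) (𝓝 p) := by
    simpa using (hline 0).continuousAt.tendsto
  have hg : ∀ i, ∀ᶠ z in 𝓝 (0 : ℂ), DifferentiableAt ℂ (fun z => f i (p + z • a)) z :=
    fun i => (htend.eventually (hf i).eventually_nhds).mono fun z hz =>
      hz.self_of_nhds.comp z (hline z).differentiableAt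
  have hg₂ : ∀ i, ContDiffAt ℝ 2 (fun z : ℂ => f i (p + z • a)) 0 := fun i =>
    (Complex.analyticAt_iff_eventually_differentiableAt.2 (hg i)).contDiffAt.restrict_scalars ℝ
  have hderiv : ∀ i, fderiv ℂ (fun z : ℂ => f i (p + z • a)) 0 1 = fderiv ℂ (f i) p a := fun i =>
    ((hf i).self_of_nhds.hasFDerivAt.comp_hasDerivAt_of_eq 0 (hline 0) (by simp)).deriv
  have hsum : fderiv ℝ (fderiv ℝ fun z : ℂ => h (p + z • a)) 0
      = ∑ i, fderiv ℝ (fderiv ℝ fun z : ℂ => ‖f i (p + z • a)‖ ^ 2) 0 := by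
    have hev : (fun z : ℂ => h (p + z • a)) =ᶠ[𝓝 0] fun z => ∑ i, ‖f i (p + z • a)‖ ^ 2 :=
      heq.comp_tendsto htend
    rw [hev.fderiv.fderiv_eq, fderiv_fderiv_sum fun i _ => (hg₂ i).norm_sq ℝ]
  have h1 : fderiv ℝ (fderiv ℝ fun z : ℂ => h (p + z • a)) 0 1 1 = fderiv ℝ (fderiv ℝ h) p a a := by
    simpa [A] using fderiv_fderiv_comp_const_add_apply hh A 1 1
  have hI : fderiv ℝ (fderiv ℝ fun z : ℂ => h (p + z • a)) 0 Complex.I Complex.I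
      = fderiv ℝ (fderiv ℝ h) p (Complex.I • a) (Complex.I • a) :=
    fderiv_fderiv_comp_const_add_apply hh A Complex.I Complex.I
  rw [← h1, ← hI, hsum]
  simp only [sum_apply, ← Finset.sum_add_distrib, Finset.mul_sum]
  refine Finset.sum_congr rfl fun i _ => ?_
  simpa [hderiv] using fderiv_fderiv_norm_sq_add_I_smul (hg i) (hg₂ i) 1

end Holomorphic

/-- Biadditive, and linear resp. conjugate-linear under multiplication by `i`; this is all that
polarization needs. -/
structure IsSesqForm {V : Type*} [AddCommGroup V] [Module ℂ V] (B : V → V → ℂ) : Prop where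
  add_left : ∀ x y z, B (x + y) z = B x z + B y z
  add_right : ∀ x y z, B x (y + z) = B x y + B x z
  I_smul_left : ∀ x y, B (Complex.I • x) y = Complex.I * B x y
  I_smul_right : ∀ x y, B x (Complex.I • y) = -Complex.I * B x y

theorem IsSesqForm.ext_of_apply_self {V : Type*} [AddCommGroup V] [Module ℂ V] {B B' : V → V → ℂ}
    (hB : IsSesqForm B) (hB' : IsSesqForm B') (h : ∀ x, B x x = B' x x) : B = B' := by
  funext x y
  have hsum := h (x + y)
  have hI := h (x + Complex.I • y)
  simp only [hB.add_left, hB.add_right, hB'.add_left, hB'.add_right, hB.I_smul_left,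
    hB.I_smul_right, hB'.I_smul_left, hB'.I_smul_right, h x, h y] at hsum hI
  have h2I : (2 * Complex.I) * (B x y - B' x y) = 0 := by
    linear_combination Complex.I * hsum - hI
  simpa [sub_eq_zero, Complex.I_ne_zero] using h2I

theorem isSesqForm_sum_mul_conj {V ι : Type*} [AddCommGroup V] [Module ℂ V] [TopologicalSpace V]
    [Fintype ι] (L : ι → V →L[ℂ] ℂ) :
    IsSesqForm fun x y => ∑ i, L i x * conj (L i y) where
  add_left x y z := by simp only [map_add, add_mul, Finset.sum_add_distrib]
  add_right x y z := by simp only [map_add, mul_add, Finset.sum_add_distrib]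
  I_smul_left x y := by simp only [map_smul, smul_eq_mul, Finset.mul_sum, mul_assoc]
  I_smul_right x y := by
    simp only [map_smul, smul_eq_mul, map_mul, Complex.conj_I, Finset.mul_sum]
    exact Finset.sum_congr rfl fun _ _ => by ring

section Hessian

variable {m : ℕ} {u v : (Fin m → ℂ) → ℝ} {p : Fin m → ℂ}

theorem mixedComplexHessian_sub (hu : ContDiffAt ℝ 2 u p) (hv : ContDiffAt ℝ 2 v p)
    (a b : Fin m → ℂ) :
    mixedComplexHessian (fun x => u x - v x) p a b
      = mixedComplexHessian u p a b - mixedComplexHessian v p a b := by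
  simp only [mixedComplexHessian, fderiv_fderiv_sub hu hv, sub_apply]
  push_cast
  ring

theorem mixedComplexHessian_comp {φ φ' : ℝ → ℝ} {φ'' : ℝ} (hu : ContDiffAt ℝ 2 u p)
    (hφ : ∀ᶠ t in 𝓝 (u p), HasDerivAt φ (φ' t) t) (hφ' : HasDerivAt φ' φ'' (u p))
    (a b : Fin m → ℂ) :
    mixedComplexHessian (fun x => φ (u x)) p a b
      = (φ' (u p) : ℂ) * mixedComplexHessian u p a b
        + (φ'' : ℂ) * wirtingerDeriv u p a * conj (wirtingerDeriv u p b) := by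
  simp only [mixedComplexHessian, wirtingerDeriv, fderiv_fderiv_comp_apply hu hφ hφ', map_mul,
    map_sub, Complex.conj_ofReal, Complex.conj_I, map_div₀, map_one, map_ofNat]
  push_cast
  ring_nf
  simp only [Complex.I_sq]
  ring

theorem mixedComplexHessian_self (hu : ContDiffAt ℝ 2 u p) (a : Fin m → ℂ) :
    mixedComplexHessian u p a a
      = ((fderiv ℝ (fderiv ℝ u) p a a
          + fderiv ℝ (fderiv ℝ u) p (Complex.I • a) (Complex.I • a) : ℝ) : ℂ) / 4 := by
  rw [mixedComplexHessian, (hu.isSymmSndFDerivAt (by simp)) a (Complex.I • a)]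
  push_cast
  ring

theorem isSesqForm_mixedComplexHessian (u : (Fin m → ℂ) → ℝ) (p : Fin m → ℂ) :
    IsSesqForm (mixedComplexHessian u p) where
  add_left x y z := by
    simp only [mixedComplexHessian, smul_add, map_add, add_apply]
    push_cast
    ring
  add_right x y z := by
    simp only [mixedComplexHessian, smul_add, map_add]
    push_cast
    ring
  I_smul_left x y := by
    simp only [mixedComplexHessian, smul_smul, Complex.I_mul_I, neg_one_smul, map_neg, neg_apply]
    push_cast
    ring_nf
    simp only [Complex.I_sq]
    ring
  I_smul_right x y := by
    simp only [mixedComplexHessian, smul_smul, Complex.I_mul_I, neg_one_smul, map_neg]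
    push_cast
    ring_nf
    simp only [Complex.I_sq]
    ring

theorem mixedComplexHessian_eq_sum_of_eventuallyEq {ι : Type*} [Fintype ι]
    {f : ι → (Fin m → ℂ) → ℂ} (hu : ContDiffAt ℝ 2 u p)
    (hf : ∀ i, ∀ᶠ x in 𝓝 p, DifferentiableAt ℂ (f i) x)
    (heq : u =ᶠ[𝓝 p] fun x => ∑ i, ‖f i x‖ ^ 2) :
    mixedComplexHessian u p = fun a b => ∑ i, fderiv ℂ (f i) p a * conj (fderiv ℂ (f i) p b) := by
  refine (isSesqForm_mixedComplexHessian u p).ext_of_apply_self (isSesqForm_sum_mul_conj _)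
    fun a => ?_
  rw [mixedComplexHessian_self hu, fderiv_fderiv_add_I_smul_of_eventuallyEq_sum_norm_sq hu hf heq]
  simp [Complex.mul_conj, Complex.normSq_eq_norm_sq]

end Hessian

theorem stmt_14_general (n : ℕ) (K : ℕ)
    (Ω : Set (Fin (n + 1) → ℂ)) (hΩ : IsOpen Ω)
    (ν N : ℝ) (hν : 0 < ν)
    (ρ : (Fin (n + 1) → ℂ) → ℝ) (hρ : ContDiffOn ℝ 2 ρ Ω)
    (hρν : ∀ x ∈ Ω, 0 < ρ x + ν)
    (ψ : (Fin (n + 1) → ℂ) → ℝ) (hψ : ContDiffOn ℝ 2 ψ Ω)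
    (hpluri : ∀ x ∈ Ω, ∀ a b : Fin (n + 1) → ℂ, mixedComplexHessian ψ x a b = 0)
    (f : Fin K → (Fin (n + 1) → ℂ) → ℂ)
    (hf : ∀ μ, DifferentiableOn ℂ (f μ) Ω)
    (heq : ∀ x ∈ Ω, (ρ x + ν) ^ N = ψ x + ∑ μ, Complex.normSq (f μ x)) :
    ∀ p ∈ Ω, ρ p = 0 → ∀ a b : Fin (n + 1) → ℂ,
      ((N * ν ^ (N - 2) : ℝ) : ℂ) *
          ((ν : ℂ) * mixedComplexHessian ρ p a b
            + ((N - 1 : ℝ) : ℂ) * wirtingerDeriv ρ p a * conj (wirtingerDeriv ρ p b)) =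
        ∑ μ, fderiv ℂ (f μ) p a * conj (fderiv ℂ (f μ) p b) := by
  intro p hp hρp a b
  have hΩp : Ω ∈ 𝓝 p := hΩ.mem_nhds hp
  have hφ : ∀ᶠ t in 𝓝 (ρ p), HasDerivAt (fun t => (t + ν) ^ N) (N * (t + ν) ^ (N - 1)) t := by
    filter_upwards [eventually_gt_nhds (show -ν < ρ p by linarith)] with t ht
    simpa using ((hasDerivAt_id t).add_const ν).rpow_const (p := N) (Or.inl (by rw [id]; linarith))
  have hφ' : HasDerivAt (fun t => N * (t + ν) ^ (N - 1)) (N * ((N - 1) * ν ^ (N - 2))) (ρ p) := by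
    have := ((hasDerivAt_id (ρ p)).add_const ν).rpow_const (p := N - 1)
      (Or.inl (by simp [hρp, hν.ne']))
    simpa [hρp, show N - 1 - 1 = N - 2 by ring] using this.const_mul N
  have hρ₂ : ContDiffAt ℝ 2 ρ p := hρ.contDiffAt hΩp
  have hψ₂ : ContDiffAt ℝ 2 ψ p := hψ.contDiffAt hΩp
  have hu₂ : ContDiffAt ℝ 2 (fun x => (ρ x + ν) ^ N) p :=
    (hρ₂.add contDiffAt_const).rpow_const_of_ne (hρν p hp).ne'
  have key := congrFun₂ (mixedComplexHessian_eq_sum_of_eventuallyEq (hu₂.sub hψ₂)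
    (fun μ => eventually_of_mem hΩp fun x hx => (hf μ).differentiableAt (hΩ.mem_nhds hx))
    (eventually_of_mem hΩp fun x hx => by simp [heq x hx, Complex.normSq_eq_norm_sq])) a b
  rw [mixedComplexHessian_sub hu₂ hψ₂, hpluri p hp, sub_zero,
    mixedComplexHessian_comp hρ₂ hφ hφ', hρp, zero_add] at key
  rw [← key, show N - 1 = N - 2 + 1 by ring, Real.rpow_add_one hν.ne']
  push_cast
  ring

/-- If `(ρ + ν)^N = ψ + ∑_μ |f^μ|²` on an open `Ω` with `ρ + ν > 0`,
`ρ` C², `ψ` C² and pluriharmonic, and `f^μ` holomorphic, then at every `p ∈ Ω` with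
`ρ(p) = 0` and all `a, b`:
`N ν^{N−2}(ν H^ρ_p(a,b) + (N−1) ∂ρ_p(a) conj(∂ρ_p(b))) = ∑_μ Df^μ_p(a)·conj(Df^μ_p(b))`. -/
theorem stmt_14 (n : ℕ) (hn : 1 ≤ n) (K : ℕ) (hK : 1 ≤ K)
    (Ω : Set (Fin (n + 1) → ℂ)) (hΩ : IsOpen Ω)
    (ν N : ℝ) (hν : 0 < ν) (hN : 0 < N)
    (ρ : (Fin (n + 1) → ℂ) → ℝ) (hρ : ContDiffOn ℝ 2 ρ Ω)
    (hρν : ∀ x ∈ Ω, 0 < ρ x + ν)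
    (ψ : (Fin (n + 1) → ℂ) → ℝ) (hψ : ContDiffOn ℝ 2 ψ Ω)
    (hpluri : ∀ x ∈ Ω, ∀ a b : Fin (n + 1) → ℂ, mixedComplexHessian ψ x a b = 0)
    (f : Fin K → (Fin (n + 1) → ℂ) → ℂ)
    (hf : ∀ μ, DifferentiableOn ℂ (f μ) Ω)
    (heq : ∀ x ∈ Ω, (ρ x + ν) ^ N = ψ x + ∑ μ, Complex.normSq (f μ x)) :
    ∀ p ∈ Ω, ρ p = 0 → ∀ a b : Fin (n + 1) → ℂ,
      ((N * ν ^ (N - 2) : ℝ) : ℂ) *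
          ((ν : ℂ) * mixedComplexHessian ρ p a b
            + ((N - 1 : ℝ) : ℂ) * wirtingerDeriv ρ p a * conj (wirtingerDeriv ρ p b)) =
        ∑ μ, fderiv ℂ (f μ) p a * conj (fderiv ℂ (f μ) p b) :=
  stmt_14_general n K Ω hΩ ν N hν ρ hρ hρν ψ hψ hpluri f hf heq
end
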